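/- arXiv:1806.02644 — 4 statements merged into one kernel-verified Lean document; each statement's English description precedes it below -/
import Mathlib

section
/- Let φ be a nonzero Bernstein function, let β ≥ 0 satisfy limsup_{u→∞} u^{−β} φ(u) < ∞, and let t > 0 with t·β ≤ 2. Then the sequence m_t(n) = (∏_{k=1}^n φ(k))^t (n ≥ 0, empty product equal to 1) is Stieltjes moment determinate: any two Borel probability measures on [0,∞) whose n-th moments equal m_t(n) for every n ≥ 0 coincide. In particular, if φ is bounded on [0,∞) then this determinacy holds for every t > 0. -/
open MeasureTheory Filter Topology Set
open scoped ENNReal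

noncomputable section

/-- A representation of a Bernstein function: killing rate `k ≥ 0`, drift `d ≥ 0`, and a
Lévy measure `μ` on `(0,∞)` integrating `min 1 y`. -/
structure BernsteinRep (φ : ℝ → ℝ) where
  k : ℝ
  d : ℝ
  μ : Measure ℝ
  k_nonneg : 0 ≤ k
  d_nonneg : 0 ≤ d
  supp : μ (Set.Iic 0) = 0
  levy : ∫⁻ y, ENNReal.ofReal (min 1 y) ∂μ < ⊤
  eq : ∀ u : ℝ, 0 ≤ u → φ u = k + d * u + ∫ y, (1 - Real.exp (-(u * y))) ∂μ

/-- `φ` is a Bernstein function. -/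
def IsBernstein (φ : ℝ → ℝ) : Prop := Nonempty (BernsteinRep φ)

/-- `φ` is not identically zero on `[0,∞)`. -/
def BernsteinNonzero (φ : ℝ → ℝ) : Prop := ∃ u : ℝ, 0 ≤ u ∧ φ u ≠ 0

/-- A representation of a Bernstein function in the Jurek class: the Lévy measure has a
non-increasing density `v` on `(0,∞)`. -/
structure BernsteinJRep (φ : ℝ → ℝ) where
  k : ℝ
  d : ℝ
  v : ℝ → ℝ
  k_nonneg : 0 ≤ k
  d_nonneg : 0 ≤ d
  v_nonneg : ∀ y : ℝ, 0 < y → 0 ≤ v y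
  v_anti : ∀ y z : ℝ, 0 < y → y ≤ z → v z ≤ v y
  levy : ∫⁻ y in Set.Ioi (0:ℝ), ENNReal.ofReal (min 1 y * v y) < ⊤
  eq : ∀ u : ℝ, 0 ≤ u →
    φ u = k + d * u + ∫ y in Set.Ioi (0:ℝ), (1 - Real.exp (-(u * y))) * v y

/-- The moment sequence `n ↦ (∏_{k=1}^n φ(k))^t` of the Berg-Urbanik semigroup at time `t`. -/
def bergSeq (φ : ℝ → ℝ) (t : ℝ) (n : ℕ) : ℝ :=
  (∏ k ∈ Finset.Icc 1 n, φ (k : ℝ)) ^ t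

/-- The probability measure `ρ` is carried by `[0,∞)` and has `n`-th moments `m n`. -/
def HasMomentSeq (ρ : Measure ℝ) (m : ℕ → ℝ) : Prop :=
  ∀ n : ℕ, ∫⁻ x, ENNReal.ofReal (x ^ n) ∂ρ = ENNReal.ofReal (m n)

/-- Stieltjes moment determinacy of the sequence `m`. -/
def StieltjesDeterminate (m : ℕ → ℝ) : Prop :=
  ∀ ρ₁ ρ₂ : Measure ℝ, IsProbabilityMeasure ρ₁ → IsProbabilityMeasure ρ₂ →
    ρ₁ (Set.Iio 0) = 0 → ρ₂ (Set.Iio 0) = 0 →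
    HasMomentSeq ρ₁ m → HasMomentSeq ρ₂ m → ρ₁ = ρ₂

/-- Stieltjes moment indeterminacy of the sequence `m`. -/
def StieltjesIndeterminate (m : ℕ → ℝ) : Prop :=
  ∃ ρ₁ ρ₂ : Measure ℝ, IsProbabilityMeasure ρ₁ ∧ IsProbabilityMeasure ρ₂ ∧
    ρ₁ (Set.Iio 0) = 0 ∧ ρ₂ (Set.Iio 0) = 0 ∧ ρ₁ ≠ ρ₂ ∧
    HasMomentSeq ρ₁ m ∧ HasMomentSeq ρ₂ m

/-- The lower index `δ_φ = sup {δ ≥ 0 : liminf u^{-δ} φ(u) > 0}`. -/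
def lowerIndex (φ : ℝ → ℝ) : ℝ :=
  sSup {δ : ℝ | 0 ≤ δ ∧ ∃ c : ℝ, 0 < c ∧ ∀ᶠ u : ℝ in atTop, c * u ^ δ ≤ φ u}

/-- The Blumenthal-Getoor index `β_φ = inf {β ≥ 0 : limsup u^{-β} φ(u) < ∞}`. -/
def upperIndex (φ : ℝ → ℝ) : ℝ :=
  sInf {β : ℝ | 0 ≤ β ∧ ∃ C : ℝ, ∀ᶠ u : ℝ in atTop, φ u ≤ C * u ^ β}

/-- The Berg-Urbanik semigroup associated to `φ`: a multiplicative convolution semigroup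
of probability measures on `[0,∞)` starting at `δ_1` with moments `(∏_{k=1}^n φ(k))^t`. -/
def IsBergUrbanik (φ : ℝ → ℝ) (ν : ℝ → Measure ℝ) : Prop :=
  (∀ t : ℝ, 0 ≤ t → IsProbabilityMeasure (ν t)) ∧
  (∀ t : ℝ, 0 ≤ t → ν t (Set.Iio 0) = 0) ∧
  ν 0 = Measure.dirac 1 ∧
  (∀ s t : ℝ, 0 ≤ s → 0 ≤ t →
    Measure.map (fun p : ℝ × ℝ => p.1 * p.2) ((ν s).prod (ν t)) = ν (s + t)) ∧
  (∀ t : ℝ, 0 ≤ t → ∀ n : ℕ,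
    ∫⁻ x, ENNReal.ofReal (x ^ n) ∂(ν t) = ENNReal.ofReal (bergSeq φ t n))

/-!
Since `φ ≥ 0` grows at most like `C u^β`, `m_t(n) ≤ (C^t)^n (n!)^{tβ} ≤ (C^t)^n (2n)!` when
`tβ ≤ 2`. Moments of this size determine a measure `ρ` on `[0,∞)`: pushing `ρ` forward under
`x ↦ ±√x` gives a symmetric measure `σ` on `ℝ` with moments `0` and `2 m(k)`, and the bound makes
`cosh (ε x)` integrable for small `ε`. So the complex moment generating function of `σ` is
holomorphic on a vertical strip around the imaginary axis; near `0` it is its Taylor series, whose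
coefficients are the moments, hence by the identity theorem the moments determine it on the whole
strip, in particular the characteristic function of `σ`, hence `σ`. Finally `ρ` is half the image
of `σ` under `x ↦ x²`.
-/

open ProbabilityTheory

theorem MeasureTheory.Measure.ext_of_integral_pow_eq {σ₁ σ₂ : Measure ℝ} [IsFiniteMeasure σ₁]
    [IsFiniteMeasure σ₂] (h₁ : 0 ∈ interior (integrableExpSet id σ₁))
    (h₂ : 0 ∈ interior (integrableExpSet id σ₂))
    (h : ∀ n : ℕ, ∫ x, x ^ n ∂σ₁ = ∫ x, x ^ n ∂σ₂) : σ₁ = σ₂ := by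
  set U : Set ℂ :=
    Complex.re ⁻¹' (interior (integrableExpSet id σ₁) ∩ interior (integrableExpSet id σ₂))
  have hU_open : IsOpen U := (isOpen_interior.inter isOpen_interior).preimage Complex.continuous_re
  have hU_conn : IsPreconnected U :=
    ((convex_integrableExpSet.interior.inter convex_integrableExpSet.interior).linear_preimage
      Complex.reLm).isPreconnected
  have h0 : (0 : ℂ) ∈ U := ⟨h₁, h₂⟩
  have hf₁ : AnalyticOnNhd ℂ (complexMGF id σ₁) U :=
    analyticOnNhd_complexMGF.mono fun z hz => hz.1
  have hf₂ : AnalyticOnNhd ℂ (complexMGF id σ₂) U :=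
    analyticOnNhd_complexMGF.mono fun z hz => hz.2
  have h_deriv (n : ℕ) :
      iteratedDeriv n (complexMGF id σ₁) 0 = iteratedDeriv n (complexMGF id σ₂) 0 := by
    rw [iteratedDeriv_complexMGF h₁, iteratedDeriv_complexMGF h₂]
    simp only [id_eq, zero_mul, Complex.exp_zero, mul_one]
    simpa only [← Complex.ofReal_pow, integral_complex_ofReal] using
      congrArg ((↑) : ℝ → ℂ) (h n)
  have h_near : complexMGF id σ₁ =ᶠ[𝓝 0] complexMGF id σ₂ := by
    obtain ⟨r, hr, hball⟩ := Metric.isOpen_iff.mp hU_open 0 h0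
    filter_upwards [Metric.ball_mem_nhds 0 hr] with z hz
    rw [← Complex.taylorSeries_eq_on_ball' hz (hf₁.differentiableOn.mono hball),
      ← Complex.taylorSeries_eq_on_ball' hz (hf₂.differentiableOn.mono hball)]
    simp_rw [h_deriv]
  have h_eq := hf₁.eqOn_of_preconnected_of_eventuallyEq hf₂ hU_conn h0 h_near
  refine Measure.ext_of_charFun (funext fun t => ?_)
  rw [← complexMGF_id_mul_I, ← complexMGF_id_mul_I]
  exact h_eq (by simpa [U] using h0)

lemma lintegral_ofReal_cosh_mul_eq_tsum (σ : Measure ℝ) (ε : ℝ) :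
    ∫⁻ x, ENNReal.ofReal (Real.cosh (ε * x)) ∂σ
      = ∑' k, ENNReal.ofReal (ε ^ (2 * k) / (2 * k).factorial)
          * ∫⁻ x, ENNReal.ofReal (x ^ (2 * k)) ∂σ := by
  have h_coeff (k : ℕ) (y : ℝ) : 0 ≤ y ^ (2 * k) / (2 * k).factorial :=
    div_nonneg ((even_two_mul k).pow_nonneg _) (by positivity)
  have h_series (x : ℝ) : ENNReal.ofReal (Real.cosh (ε * x))
      = ∑' k, ENNReal.ofReal (ε ^ (2 * k) / (2 * k).factorial) * ENNReal.ofReal (x ^ (2 * k)) := by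
    rw [Real.cosh_eq_tsum,
      ENNReal.ofReal_tsum_of_nonneg (h_coeff · _) (Real.hasSum_cosh _).summable]
    refine tsum_congr fun k => ?_
    rw [← ENNReal.ofReal_mul (h_coeff k ε), mul_pow, mul_div_right_comm]
  simp_rw [h_series]
  rw [lintegral_tsum fun k => by fun_prop]
  simp_rw [lintegral_const_mul' _ _ ENNReal.ofReal_ne_top]

lemma integrable_cosh_mul_of_lintegral_pow_le {σ : Measure ℝ} {C A ε : ℝ}
    (h : ∀ k : ℕ, ∫⁻ x, ENNReal.ofReal (x ^ (2 * k)) ∂σ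
      ≤ ENNReal.ofReal (C * A ^ k * (2 * k).factorial))
    (hε : ε ^ 2 * |A| < 1) :
    Integrable (fun x => Real.cosh (ε * x)) σ := by
  refine ⟨by fun_prop, ?_⟩
  rw [hasFiniteIntegral_iff_ofReal (ae_of_all _ fun x => (Real.cosh_pos _).le),
    lintegral_ofReal_cosh_mul_eq_tsum]
  have h_geom : Summable fun k : ℕ => |C| * (ε ^ 2 * |A|) ^ k :=
    (summable_geometric_of_lt_one (by positivity) hε).mul_left _
  have h_term (k : ℕ) : ENNReal.ofReal (ε ^ (2 * k) / (2 * k).factorial)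
      * ∫⁻ x, ENNReal.ofReal (x ^ (2 * k)) ∂σ ≤ ENNReal.ofReal (|C| * (ε ^ 2 * |A|) ^ k) := by
    refine (mul_le_mul_right (h k) _).trans ?_
    rw [← ENNReal.ofReal_mul (div_nonneg ((even_two_mul k).pow_nonneg _) (by positivity))]
    refine ENNReal.ofReal_le_ofReal ?_
    calc ε ^ (2 * k) / (2 * k).factorial * (C * A ^ k * (2 * k).factorial)
        = C * (ε ^ 2 * A) ^ k := by
          rw [mul_pow, ← pow_mul]; field_simp
      _ ≤ |C * (ε ^ 2 * A) ^ k| := le_abs_self _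
      _ = |C| * (ε ^ 2 * |A|) ^ k := by
          rw [abs_mul, abs_pow, abs_mul, abs_of_nonneg (sq_nonneg ε)]
  calc ∑' k, ENNReal.ofReal (ε ^ (2 * k) / (2 * k).factorial)
          * ∫⁻ x, ENNReal.ofReal (x ^ (2 * k)) ∂σ
      ≤ ∑' k : ℕ, ENNReal.ofReal (|C| * (ε ^ 2 * |A|) ^ k) := ENNReal.tsum_le_tsum h_term
    _ = ENNReal.ofReal (∑' k : ℕ, |C| * (ε ^ 2 * |A|) ^ k) :=
        (ENNReal.ofReal_tsum_of_nonneg (fun k => by positivity) h_geom).symm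
    _ < ⊤ := ENNReal.ofReal_lt_top

lemma zero_mem_interior_integrableExpSet_of_lintegral_pow_le {σ : Measure ℝ} {C A : ℝ}
    (h : ∀ k : ℕ, ∫⁻ x, ENNReal.ofReal (x ^ (2 * k)) ∂σ
      ≤ ENNReal.ofReal (C * A ^ k * (2 * k).factorial)) :
    0 ∈ interior (integrableExpSet id σ) := by
  set ε : ℝ := (|A| + 1)⁻¹
  have hε : 0 < ε := by positivity
  have hεA : ε ^ 2 * |A| < 1 := calc
    ε ^ 2 * |A| = ε * (ε * |A|) := by ring
    _ ≤ ε * |A| := mul_le_of_le_one_left (by positivity) (inv_le_one_of_one_le₀ (by simp))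
    _ < 1 := by rw [inv_mul_lt_one₀ (by positivity)]; linarith
  have h_cosh := integrable_cosh_mul_of_lintegral_pow_le h hεA
  refine mem_interior_iff_mem_nhds.mpr <|
    mem_of_superset (Ioo_mem_nhds (neg_lt_zero.mpr hε) hε) fun t ht => ?_
  refine (h_cosh.const_mul 2).mono' (by fun_prop) (ae_of_all _ fun x => ?_)
  rw [Real.norm_eq_abs, abs_of_pos (Real.exp_pos _), id]
  calc Real.exp (t * x) ≤ 2 * Real.cosh (t * x) := by
        rw [Real.cosh_eq]; linarith [Real.exp_pos (-(t * x))]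
    _ ≤ 2 * Real.cosh (ε * x) := by
        gcongr
        rw [Real.cosh_le_cosh, abs_mul, abs_mul, abs_of_pos hε]
        exact mul_le_mul_of_nonneg_right (abs_le.mpr ⟨ht.1.le, ht.2.le⟩) (abs_nonneg x)

def symmSqrt (ρ : Measure ℝ) : Measure ℝ :=
  ρ.map Real.sqrt + ρ.map fun x => -Real.sqrt x

instance (ρ : Measure ℝ) [IsFiniteMeasure ρ] : IsFiniteMeasure (symmSqrt ρ) := by
  unfold symmSqrt; infer_instance

lemma map_neg_symmSqrt (ρ : Measure ℝ) : (symmSqrt ρ).map Neg.neg = symmSqrt ρ := by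
  rw [symmSqrt, Measure.map_add _ _ measurable_neg, Measure.map_map measurable_neg (by fun_prop),
    Measure.map_map measurable_neg (by fun_prop), add_comm]
  simp only [Function.comp_def, neg_neg]

lemma map_sq_symmSqrt {ρ : Measure ℝ} (hρ : ∀ᵐ x ∂ρ, 0 ≤ x) :
    (symmSqrt ρ).map (· ^ 2) = (2 : ℝ≥0∞) • ρ := by
  have h_sq : (fun x : ℝ => x ^ 2) ∘ Real.sqrt =ᵐ[ρ] id := by
    filter_upwards [hρ] with x hx using Real.sq_sqrt hx
  have h_neg_sq : (fun x : ℝ => x ^ 2) ∘ (fun x => -Real.sqrt x) =ᵐ[ρ] id := by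
    filter_upwards [hρ] with x hx using (neg_sq _).trans (Real.sq_sqrt hx)
  rw [symmSqrt, Measure.map_add _ _ (by fun_prop), Measure.map_map (by fun_prop) (by fun_prop),
    Measure.map_map (by fun_prop) (by fun_prop), Measure.map_congr h_sq,
    Measure.map_congr h_neg_sq, Measure.map_id, two_smul]

lemma integral_pow_eq_zero_of_map_neg_eq_self {σ : Measure ℝ} (hσ : σ.map Neg.neg = σ) {n : ℕ}
    (hn : Odd n) : ∫ x, x ^ n ∂σ = 0 := by
  have h : ∫ x, x ^ n ∂σ = -∫ x, x ^ n ∂σ := by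
    conv_lhs => rw [← hσ]
    rw [integral_map measurable_neg.aemeasurable (by fun_prop), ← integral_neg]
    simp_rw [hn.neg_pow]
  linarith

lemma integral_pow_two_mul_symmSqrt {ρ : Measure ℝ} (hρ : ∀ᵐ x ∂ρ, 0 ≤ x) (k : ℕ) :
    ∫ x, x ^ (2 * k) ∂symmSqrt ρ = 2 * ∫ x, x ^ k ∂ρ := by
  have h := integral_map (μ := symmSqrt ρ) (φ := (· ^ 2)) (f := (· ^ k))
    (by fun_prop) (by fun_prop)
  rw [map_sq_symmSqrt hρ, integral_smul_measure] at h
  simpa [pow_mul] using h.symm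

lemma lintegral_pow_two_mul_symmSqrt {ρ : Measure ℝ} (hρ : ∀ᵐ x ∂ρ, 0 ≤ x) (k : ℕ) :
    ∫⁻ x, ENNReal.ofReal (x ^ (2 * k)) ∂symmSqrt ρ = 2 * ∫⁻ x, ENNReal.ofReal (x ^ k) ∂ρ := by
  have h := lintegral_map (μ := symmSqrt ρ) (f := fun y => ENNReal.ofReal (y ^ k))
    (g := (· ^ 2)) (by fun_prop) (by fun_prop)
  rw [map_sq_symmSqrt hρ, lintegral_smul_measure] at h
  simpa [pow_mul] using h.symm

theorem stieltjesDeterminate_of_le_mul_pow_mul_factorial {m : ℕ → ℝ} {C A : ℝ}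
    (hm : ∀ n, m n ≤ C * A ^ n * (2 * n).factorial) : StieltjesDeterminate m := by
  intro ρ₁ ρ₂ _ _ h₁ h₂ hm₁ hm₂
  simp only [measure_eq_zero_iff_ae_notMem, mem_Iio, not_lt] at h₁ h₂
  have h_interior {ρ : Measure ℝ} (hρ : ∀ᵐ x ∂ρ, 0 ≤ x) (hmρ : HasMomentSeq ρ m) :
      0 ∈ interior (integrableExpSet id (symmSqrt ρ)) := by
    refine zero_mem_interior_integrableExpSet_of_lintegral_pow_le (C := 2 * C) (A := A) fun k => ?_
    rw [lintegral_pow_two_mul_symmSqrt hρ, hmρ, mul_assoc, mul_assoc,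
      ENNReal.ofReal_mul zero_le_two, ENNReal.ofReal_ofNat, ← mul_assoc]
    gcongr
    exact hm k
  have h_integral {ρ : Measure ℝ} (hρ : ∀ᵐ x ∂ρ, 0 ≤ x) (hmρ : HasMomentSeq ρ m) (k : ℕ) :
      ∫ x, x ^ k ∂ρ = (ENNReal.ofReal (m k)).toReal := by
    rw [integral_eq_lintegral_of_nonneg_ae (hρ.mono fun x hx => pow_nonneg hx k) (by fun_prop),
      hmρ]
  have h_moments (n : ℕ) : ∫ x, x ^ n ∂symmSqrt ρ₁ = ∫ x, x ^ n ∂symmSqrt ρ₂ := by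
    rcases Nat.even_or_odd' n with ⟨k, rfl | rfl⟩
    · rw [integral_pow_two_mul_symmSqrt h₁, integral_pow_two_mul_symmSqrt h₂,
        h_integral h₁ hm₁, h_integral h₂ hm₂]
    · rw [integral_pow_eq_zero_of_map_neg_eq_self (map_neg_symmSqrt ρ₁) (odd_two_mul_add_one k),
        integral_pow_eq_zero_of_map_neg_eq_self (map_neg_symmSqrt ρ₂) (odd_two_mul_add_one k)]
  have h_two : (2 : ℝ≥0∞) • ρ₁ = (2 : ℝ≥0∞) • ρ₂ := by
    rw [← map_sq_symmSqrt h₁, ← map_sq_symmSqrt h₂,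
      Measure.ext_of_integral_pow_eq (h_interior h₁ hm₁) (h_interior h₂ hm₂) h_moments]
  ext s -
  simpa [ENNReal.mul_right_inj] using congrArg (· s) h_two

lemma BernsteinRep.nonneg {φ : ℝ → ℝ} (R : BernsteinRep φ) {u : ℝ} (hu : 0 ≤ u) : 0 ≤ φ u := by
  have h_pos : ∀ᵐ y ∂(R.μ), 0 < y := by
    simpa [measure_eq_zero_iff_ae_notMem] using R.supp
  have h_int : 0 ≤ ∫ y, (1 - Real.exp (-(u * y))) ∂(R.μ) := integral_nonneg_of_ae <|
    h_pos.mono fun y hy => sub_nonneg.mpr (Real.exp_le_one_iff.mpr (by nlinarith))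
  rw [R.eq u hu]
  have := mul_nonneg R.d_nonneg hu
  linarith [R.k_nonneg]

lemma exists_pos_forall_natCast_le_mul_rpow {f : ℝ → ℝ} {β : ℝ} (hf : ∀ k : ℕ, 0 ≤ f k)
    (h : ∃ C, ∀ᶠ u in atTop, f u ≤ C * u ^ β) :
    ∃ C > 0, ∀ k : ℕ, 1 ≤ k → f k ≤ C * (k : ℝ) ^ β := by
  obtain ⟨C, hC⟩ := h
  have h_bigO : (fun k : ℕ => f k) =O[atTop] fun k : ℕ => (k : ℝ) ^ β := by
    refine Asymptotics.IsBigO.of_bound |C| ?_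
    filter_upwards [tendsto_natCast_atTop_atTop.eventually hC] with k hk
    rw [Real.norm_of_nonneg (hf k), Real.norm_of_nonneg (by positivity)]
    exact hk.trans (by gcongr; exact le_abs_self C)
  obtain ⟨C', hC', hbound⟩ := Asymptotics.bound_of_isBigO_nat_atTop h_bigO
  refine ⟨C', hC', fun k hk => ?_⟩
  have hk_pos : (0 : ℝ) < k := by exact_mod_cast hk
  simpa [Real.norm_of_nonneg (hf k), abs_of_pos (Real.rpow_pos_of_pos hk_pos β)]
    using hbound (Real.rpow_pos_of_pos hk_pos β).ne'

lemma bergSeq_le_pow_mul_factorial_sq {φ : ℝ → ℝ} {C β t : ℝ} (hφ0 : ∀ k : ℕ, 0 ≤ φ k)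
    (hC : 0 ≤ C) (hφ : ∀ k : ℕ, 1 ≤ k → φ k ≤ C * (k : ℝ) ^ β) (ht : 0 ≤ t) (htβ : t * β ≤ 2)
    (n : ℕ) :
    bergSeq φ t n ≤ (C ^ t) ^ n * (n.factorial : ℝ) ^ 2 := by
  have h_factor (k : ℕ) (hk : 1 ≤ k) : φ k ^ t ≤ C ^ t * (k : ℝ) ^ 2 := by
    have hk1 : (1 : ℝ) ≤ k := by exact_mod_cast hk
    calc φ k ^ t ≤ (C * (k : ℝ) ^ β) ^ t := Real.rpow_le_rpow (hφ0 k) (hφ k hk) ht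
      _ = C ^ t * (k : ℝ) ^ (t * β) := by
          rw [Real.mul_rpow hC (by positivity), ← Real.rpow_mul (by positivity), mul_comm β]
      _ ≤ C ^ t * (k : ℝ) ^ 2 := by
          gcongr
          exact_mod_cast Real.rpow_le_rpow_of_exponent_le hk1 htβ
  rw [bergSeq, ← Real.finsetProd_rpow _ _ (fun k _ => hφ0 k)]
  calc ∏ k ∈ Finset.Icc 1 n, φ k ^ t ≤ ∏ k ∈ Finset.Icc 1 n, C ^ t * (k : ℝ) ^ 2 :=
        Finset.prod_le_prod (fun k _ => by have := hφ0 k; positivity)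
          fun k hk => h_factor k (Finset.mem_Icc.mp hk).1
    _ = (C ^ t) ^ n * (n.factorial : ℝ) ^ 2 := by
        rw [Finset.prod_mul_distrib, Finset.prod_const, Nat.card_Icc, Nat.add_sub_cancel,
          Finset.prod_pow, ← Nat.cast_prod, ← Finset.Ico_add_one_right_eq_Icc,
          Finset.prod_Ico_id_eq_factorial]

lemma Nat.factorial_sq_le_factorial_two_mul (n : ℕ) : n.factorial ^ 2 ≤ (2 * n).factorial :=
  (sq n.factorial).trans_le <| Nat.le_of_dvd (Nat.factorial_pos _) <|
    two_mul n ▸ Nat.factorial_mul_factorial_dvd_factorial_add n n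

theorem bergUrbanik_momentDeterminate_of_upperBound_general
    (φ : ℝ → ℝ) (hφ : IsBernstein φ) :
    (∀ β : ℝ, 0 ≤ β → (∃ C : ℝ, ∀ᶠ u : ℝ in atTop, φ u ≤ C * u ^ β) →
      ∀ t : ℝ, 0 < t → t * β ≤ 2 → StieltjesDeterminate (bergSeq φ t)) ∧
    ((∃ C : ℝ, ∀ u : ℝ, 0 ≤ u → φ u ≤ C) →
      ∀ t : ℝ, 0 < t → StieltjesDeterminate (bergSeq φ t)) := by
  obtain ⟨R⟩ := hφ
  have hφ0 (k : ℕ) : 0 ≤ φ k := R.nonneg k.cast_nonneg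
  have h_main : ∀ β : ℝ, 0 ≤ β → (∃ C : ℝ, ∀ᶠ u : ℝ in atTop, φ u ≤ C * u ^ β) →
      ∀ t : ℝ, 0 < t → t * β ≤ 2 → StieltjesDeterminate (bergSeq φ t) := by
    intro β _ h_growth t ht htβ
    obtain ⟨C, hC, hCφ⟩ := exists_pos_forall_natCast_le_mul_rpow hφ0 h_growth
    refine stieltjesDeterminate_of_le_mul_pow_mul_factorial (C := 1) (A := C ^ t) fun n => ?_
    calc bergSeq φ t n ≤ (C ^ t) ^ n * (n.factorial : ℝ) ^ 2 :=
          bergSeq_le_pow_mul_factorial_sq hφ0 hC.le hCφ ht.le htβ n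
      _ ≤ 1 * (C ^ t) ^ n * (2 * n).factorial := by
          rw [one_mul]
          gcongr
          exact_mod_cast Nat.factorial_sq_le_factorial_two_mul n
  refine ⟨h_main, fun ⟨C, hC⟩ t ht => h_main 0 le_rfl ⟨C, ?_⟩ t ht (by simp)⟩
  filter_upwards [eventually_ge_atTop 0] with u hu
  simpa using hC u hu

/-- If `limsup_{u→∞} u^{-β} φ(u) < ∞` with `β ≥ 0`, and `t > 0` with `t·β ≤ 2`,
then the sequence `n ↦ (∏_{k=1}^n φ(k))^t` is Stieltjes moment determinate. In particular,
if `φ` is bounded on `[0,∞)` this holds for every `t > 0`. -/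
theorem bergUrbanik_momentDeterminate_of_upperBound
    (φ : ℝ → ℝ) (hφ : IsBernstein φ) (hnz : BernsteinNonzero φ) :
    (∀ β : ℝ, 0 ≤ β → (∃ C : ℝ, ∀ᶠ u : ℝ in atTop, φ u ≤ C * u ^ β) →
      ∀ t : ℝ, 0 < t → t * β ≤ 2 → StieltjesDeterminate (bergSeq φ t)) ∧
    ((∃ C : ℝ, ∀ u : ℝ, 0 ≤ u → φ u ≤ C) →
      ∀ t : ℝ, 0 < t → StieltjesDeterminate (bergSeq φ t)) :=
  bergUrbanik_momentDeterminate_of_upperBound_general φ hφ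

end
end

section
/- Let φ be a nonzero Bernstein function (so φ is infinitely differentiable on (0,∞) with φ'(u) = d + ∫_{(0,∞)} y e^{−uy} μ(dy)). Define a(n) = ∑_{k=1}^n φ'(k)/φ(k) − log φ(n) and g(n) = ∑_{k=1}^n φ'(k)/φ(k) − log φ(n+1) for n ≥ 1. Then g is non-decreasing, a(n) − g(n) → 0 as n → ∞, both sequences converge to a common limit γ_φ, and γ_φ ∈ [−log φ(1), φ'(1)/φ(1) − log φ(1)]. -/
open MeasureTheory Filter Topology Set
open scoped ENNReal

noncomputable section

/-!
Each `u ↦ 1 - exp (-u y)` with `y > 0` is nonnegative, nondecreasing and concave, hence so is a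
Bernstein function `φ` on `[0,∞)`; if `φ` is nonzero it is positive on `(0,∞)`. Then `log ∘ φ`
is concave on `(0,∞)` with derivative `φ'/φ`, so `log φ(k+1) - log φ(k)` lies between
`φ'(k+1)/φ(k+1)` and `φ'(k)/φ(k)`: `g` is nondecreasing and `a` is nonincreasing from `n = 1`.
Concavity and `φ 0 ≥ 0` give `0 ≤ φ'(n)/φ(n) ≤ 1/n`, so `a(n) - g(n) = log φ(n+1) - log φ(n)`
tends to `0`, and the common limit lies between `g(1) ≥ -log φ(1)` and `a(1)`.
-/

open Real

lemma one_sub_exp_neg_mul_nonneg {u y : ℝ} (hu : 0 ≤ u) (hy : 0 ≤ y) :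
    0 ≤ 1 - exp (-(u * y)) :=
  sub_nonneg.2 (exp_le_one_iff.2 (neg_nonpos.2 (mul_nonneg hu hy)))

lemma one_sub_exp_neg_mul_le {u y : ℝ} (hy : 0 ≤ y) :
    1 - exp (-(u * y)) ≤ max 1 u * min 1 y := by
  rcases le_total y 1 with h | h
  · rw [min_eq_right h]
    calc 1 - exp (-(u * y)) ≤ u * y := by linarith [add_one_le_exp (-(u * y))]
      _ ≤ max 1 u * y := by gcongr; exact le_max_right 1 u
  · rw [min_eq_left h, mul_one]
    linarith [exp_pos (-(u * y)), le_max_left 1 u]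

namespace BernsteinRep

variable {φ : ℝ → ℝ}

lemma ae_pos (R : BernsteinRep φ) : ∀ᵐ y ∂ R.μ, 0 < y :=
  ae_iff.2 (by simpa only [not_lt, ← Iic_def] using R.supp)

lemma integrable_min_one (R : BernsteinRep φ) : Integrable (fun y => min 1 y) R.μ :=
  ⟨by fun_prop, (hasFiniteIntegral_iff_ofReal
    (R.ae_pos.mono fun _ hy => le_min zero_le_one hy.le)).2 R.levy⟩

lemma integrable_one_sub_exp (R : BernsteinRep φ) {u : ℝ} (hu : 0 ≤ u) :
    Integrable (fun y => 1 - exp (-(u * y))) R.μ :=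
  (R.integrable_min_one.const_mul (max 1 u)).mono' (by fun_prop) <|
    R.ae_pos.mono fun _ hy => by
      rw [norm_of_nonneg (one_sub_exp_neg_mul_nonneg hu hy.le)]
      exact one_sub_exp_neg_mul_le hy.le

lemma apply_zero (R : BernsteinRep φ) : φ 0 = R.k := by
  simp [R.eq 0 le_rfl]

lemma monotoneOn (R : BernsteinRep φ) : MonotoneOn φ (Ici 0) := by
  intro x hx y hy hxy
  rw [R.eq x hx, R.eq y hy]
  have := R.d_nonneg
  gcongr R.k + R.d * ?_ + ?_
  refine integral_mono_ae (R.integrable_one_sub_exp hx) (R.integrable_one_sub_exp hy)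
    (R.ae_pos.mono fun t ht => ?_)
  dsimp only
  gcongr

lemma concaveOn_integral (R : BernsteinRep φ) :
    ConcaveOn ℝ (Ici 0) fun u => ∫ y, (1 - exp (-(u * y))) ∂ R.μ := by
  refine ⟨convex_Ici 0, fun x hx y hy a b ha hb hab => ?_⟩
  have hix := (R.integrable_one_sub_exp hx).const_mul a
  have hiy := (R.integrable_one_sub_exp hy).const_mul b
  simp only [smul_eq_mul, ← integral_const_mul, ← integral_add hix hiy]
  refine integral_mono_ae (hix.add hiy)
    (R.integrable_one_sub_exp (convex_Ici 0 hx hy ha hb hab)) (Eventually.of_forall fun t => ?_)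
  have hexp := convexOn_exp.2 (mem_univ (-(x * t))) (mem_univ (-(y * t))) ha hb hab
  rw [smul_eq_mul, smul_eq_mul, show a * -(x * t) + b * -(y * t) = -((a * x + b * y) * t) by ring]
    at hexp
  dsimp only
  linear_combination hexp + hab

lemma concaveOn (R : BernsteinRep φ) : ConcaveOn ℝ (Ici 0) φ :=
  (((concaveOn_const R.k (convex_Ici 0)).add ((concaveOn_id (convex_Ici 0)).smul R.d_nonneg)).add
    R.concaveOn_integral).congr fun u hu => (R.eq u hu).symm

end BernsteinRep

section ConcaveOnIci

variable {f : ℝ → ℝ}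

lemma ConcaveOn.pos_of_ne_zero (hc : ConcaveOn ℝ (Ici 0) f) (hm : MonotoneOn f (Ici 0))
    (h0 : 0 ≤ f 0) {u₀ u : ℝ} (hu₀ : 0 ≤ u₀) (hne : f u₀ ≠ 0) (hu : 0 < u) :
    0 < f u := by
  have hpos : 0 < f u₀ := (h0.trans (hm self_mem_Ici hu₀ hu₀)).lt_of_ne' hne
  rcases le_total u₀ u with h | h
  · exact hpos.trans_le (hm hu₀ hu.le h)
  · have hu₀' : 0 < u₀ := hu.trans_le h
    have ht : u / u₀ ≤ 1 := (div_le_one hu₀').2 h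
    have hconc := hc.2 self_mem_Ici hu₀ (sub_nonneg.2 ht) (by positivity) (sub_add_cancel 1 _)
    simp only [smul_eq_mul, mul_zero, zero_add, div_mul_cancel₀ u hu₀'.ne'] at hconc
    have : 0 < u / u₀ * f u₀ := by positivity
    nlinarith

variable {f' : ℝ → ℝ} {x : ℝ}

lemma ConcaveOn.hasDerivAt_le_div (hc : ConcaveOn ℝ (Ici 0) f) (h0 : 0 ≤ f 0) (hx : 0 < x)
    (hd : HasDerivAt f (f' x) x) : f' x ≤ f x / x :=
  calc f' x ≤ slope f 0 x := hc.le_slope_of_hasDerivAt self_mem_Ici hx.le hx hd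
    _ = (f x - f 0) / x := by rw [slope_def_field, sub_zero]
    _ ≤ f x / x := by gcongr; linarith

lemma ConcaveOn.hasDerivAt_nonneg (hc : ConcaveOn ℝ (Ici 0) f) (hm : MonotoneOn f (Ici 0))
    (hx : 0 < x) (hd : HasDerivAt f (f' x) x) : 0 ≤ f' x := by
  have hx₁ : x + 1 ∈ Ici 0 := by rw [Set.mem_Ici]; linarith
  exact (hm.slope_nonneg hx.le hx₁).trans
    (hc.slope_le_of_hasDerivAt hx.le hx₁ (lt_add_one x) hd)

lemma ConcaveOn.tendsto_logDeriv_natCast (hc : ConcaveOn ℝ (Ici 0) f)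
    (hm : MonotoneOn f (Ici 0)) (h0 : 0 ≤ f 0) (hpos : ∀ x, 0 < x → 0 < f x)
    (hd : ∀ x, 0 < x → HasDerivAt f (f' x) x) :
    Tendsto (fun n : ℕ => f' n / f n) atTop (𝓝 0) := by
  refine tendsto_of_tendsto_of_tendsto_of_le_of_le' tendsto_const_nhds
    tendsto_one_div_atTop_nhds_zero_nat ?_ ?_ <;>
    filter_upwards [eventually_gt_atTop 0] with n hn <;>
    have hn : (0 : ℝ) < n := Nat.cast_pos.2 hn
  · exact div_nonneg (hc.hasDerivAt_nonneg hm hn (hd n hn)) (hpos n hn).le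
  · rw [div_le_div_iff₀ (hpos n hn) hn, one_mul]
    exact (le_div_iff₀ hn).1 (hc.hasDerivAt_le_div h0 hn (hd n hn))

end ConcaveOnIci

lemma ConcaveOn.log_comp {f : ℝ → ℝ} {s : Set ℝ} (hc : ConcaveOn ℝ s f)
    (hpos : ∀ x ∈ s, 0 < f x) : ConcaveOn ℝ s (log ∘ f) :=
  ⟨hc.1, fun x hx y hy a b ha hb hab =>
    calc a • log (f x) + b • log (f y) ≤ log (a • f x + b • f y) :=
          strictConcaveOn_log_Ioi.concaveOn.2 (hpos x hx) (hpos y hy) ha hb hab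
      _ ≤ log (f (a • x + b • y)) :=
          log_le_log (convex_Ioi (0 : ℝ) (hpos x hx) (hpos y hy) ha hb hab)
            (hc.2 hx hy ha hb hab)⟩

lemma ConcaveOn.hasDerivAt_add_one_le_sub_le {ψ ψ' : ℝ → ℝ} {s : Set ℝ} {x : ℝ}
    (hc : ConcaveOn ℝ s ψ) (hx : x ∈ s) (hx₁ : x + 1 ∈ s) (hd : HasDerivAt ψ (ψ' x) x)
    (hd₁ : HasDerivAt ψ (ψ' (x + 1)) (x + 1)) :
    ψ' (x + 1) ≤ ψ (x + 1) - ψ x ∧ ψ (x + 1) - ψ x ≤ ψ' x := by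
  have hslope : slope ψ x (x + 1) = ψ (x + 1) - ψ x := by
    rw [slope_def_field, add_sub_cancel_left, div_one]
  rw [← hslope]
  exact ⟨hc.le_slope_of_hasDerivAt hx hx₁ (lt_add_one x) hd₁,
    hc.slope_le_of_hasDerivAt hx hx₁ (lt_add_one x) hd⟩

lemma ConcaveOn.logDeriv_add_one_le_log_sub_le {f f' : ℝ → ℝ} (hc : ConcaveOn ℝ (Ioi 0) f)
    (hpos : ∀ x, 0 < x → 0 < f x) (hd : ∀ x, 0 < x → HasDerivAt f (f' x) x) {x : ℝ}
    (hx : 0 < x) :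
    f' (x + 1) / f (x + 1) ≤ log (f (x + 1)) - log (f x) ∧
      log (f (x + 1)) - log (f x) ≤ f' x / f x := by
  have hx₁ : 0 < x + 1 := by linarith
  exact (hc.log_comp hpos).hasDerivAt_add_one_le_sub_le (ψ' := fun x => f' x / f x) hx hx₁
    ((hd x hx).log (hpos x hx).ne') ((hd _ hx₁).log (hpos _ hx₁).ne')

lemma BernsteinRep.pos_of_nonzero {φ : ℝ → ℝ} (R : BernsteinRep φ) (hnz : BernsteinNonzero φ)
    {u : ℝ} (hu : 0 < u) : 0 < φ u :=
  let ⟨_, hu₀, hne⟩ := hnz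
  R.concaveOn.pos_of_ne_zero R.monotoneOn (R.apply_zero ▸ R.k_nonneg) hu₀ hne hu

section EulerConstant

variable {c L : ℝ → ℝ}

lemma monotone_sum_sub_succ
    (hstep : ∀ k : ℕ, 1 ≤ k → c (k + 1) ≤ L (k + 1) - L k ∧ L (k + 1) - L k ≤ c k) :
    Monotone fun n : ℕ => ∑ k ∈ Finset.Icc 1 n, c k - L (n + 1) := by
  refine monotone_nat_of_le_succ fun n => ?_
  have := (hstep (n + 1) (by omega)).2
  rw [Finset.sum_Icc_succ_top (by omega)]
  push_cast at this ⊢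
  linarith

lemma antitoneOn_sum_sub
    (hstep : ∀ k : ℕ, 1 ≤ k → c (k + 1) ≤ L (k + 1) - L k ∧ L (k + 1) - L k ≤ c k) :
    AntitoneOn (fun n : ℕ => ∑ k ∈ Finset.Icc 1 n, c k - L n) (Ici 1) := by
  refine antitoneOn_nat_Ici_of_succ_le fun n hn => ?_
  rw [Finset.sum_Icc_succ_top (by omega)]
  push_cast
  linarith [(hstep n hn).1]

lemma tendsto_add_one_sub
    (hstep : ∀ k : ℕ, 1 ≤ k → c (k + 1) ≤ L (k + 1) - L k ∧ L (k + 1) - L k ≤ c k)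
    (hc : Tendsto (fun n : ℕ => c n) atTop (𝓝 0)) :
    Tendsto (fun n : ℕ => L (n + 1) - L n) atTop (𝓝 0) := by
  have hc₁ : Tendsto (fun n : ℕ => c (n + 1)) atTop (𝓝 0) := by
    simpa only [Nat.cast_add, Nat.cast_one] using (tendsto_add_atTop_iff_nat 1).2 hc
  refine tendsto_of_tendsto_of_tendsto_of_le_of_le' hc₁ hc ?_ ?_ <;>
    filter_upwards [eventually_ge_atTop 1] with n hn
  exacts [(hstep n hn).1, (hstep n hn).2]

theorem exists_tendsto_sum_sub
    (hstep : ∀ k : ℕ, 1 ≤ k → c (k + 1) ≤ L (k + 1) - L k ∧ L (k + 1) - L k ≤ c k)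
    (hc : Tendsto (fun n : ℕ => c n) atTop (𝓝 0)) :
    ∃ γ, Tendsto (fun n : ℕ => ∑ k ∈ Finset.Icc 1 n, c k - L n) atTop (𝓝 γ) ∧
      Tendsto (fun n : ℕ => ∑ k ∈ Finset.Icc 1 n, c k - L (n + 1)) atTop (𝓝 γ) ∧
      -L 1 ≤ γ ∧ γ ≤ c 1 - L 1 := by
  set a := fun n : ℕ => ∑ k ∈ Finset.Icc 1 n, c k - L n
  set g := fun n : ℕ => ∑ k ∈ Finset.Icc 1 n, c k - L (n + 1)
  have hag : a = g + fun n : ℕ => L (n + 1) - L n := by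
    funext n; simp only [a, g, Pi.add_apply]; ring
  have ha_le : ∀ n, 1 ≤ n → a n ≤ a 1 := fun n hn =>
    antitoneOn_sum_sub hstep (le_refl 1) hn hn
  obtain ⟨γ, hg⟩ : ∃ γ, Tendsto g atTop (𝓝 γ) := by
    refine (tendsto_atTop_of_monotone (monotone_sum_sub_succ hstep)).resolve_left fun hg => ?_
    have ha : Tendsto a atTop atTop := hag ▸ hg.atTop_add (tendsto_add_one_sub hstep hc)
    obtain ⟨n, hn, hn₁⟩ := ((ha.eventually_gt_atTop (a 1)).and (eventually_ge_atTop 1)).exists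
    exact (ha_le n hn₁).not_gt hn
  have ha : Tendsto a atTop (𝓝 γ) := by
    rw [hag, ← add_zero γ]
    exact hg.add (tendsto_add_one_sub hstep hc)
  refine ⟨γ, ha, hg, ?_, ?_⟩
  · calc -L 1 ≤ g 1 := by
          have := (hstep 1 le_rfl).2
          simp only [g, Finset.Icc_self, Finset.sum_singleton, Nat.cast_one] at this ⊢
          linarith
      _ ≤ γ := (monotone_sum_sub_succ hstep).ge_of_tendsto hg 1
  · calc γ ≤ a 1 := le_of_tendsto ha ((eventually_ge_atTop 1).mono ha_le)
      _ = c 1 - L 1 := by simp [a]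

end EulerConstant

/-- For a nonzero Bernstein function `φ` with derivative `φ'` on `(0,∞)`, the
sequences `a(n) = ∑_{k=1}^n φ'(k)/φ(k) − log φ(n)` and
`g(n) = ∑_{k=1}^n φ'(k)/φ(k) − log φ(n+1)` satisfy: `g` is non-decreasing, `a − g → 0`,
both converge to a common limit `γ_φ ∈ [−log φ(1), φ'(1)/φ(1) − log φ(1)]`. -/
theorem bernstein_gamma_constant
    (φ φ' : ℝ → ℝ) (hφ : IsBernstein φ) (hnz : BernsteinNonzero φ)
    (hderiv : ∀ u : ℝ, 0 < u → HasDerivAt φ (φ' u) u)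
    (a g : ℕ → ℝ)
    (ha : ∀ n : ℕ, a n = (∑ k ∈ Finset.Icc 1 n, φ' (k : ℝ) / φ (k : ℝ))
      - Real.log (φ (n : ℝ)))
    (hg : ∀ n : ℕ, g n = (∑ k ∈ Finset.Icc 1 n, φ' (k : ℝ) / φ (k : ℝ))
      - Real.log (φ ((n : ℝ) + 1))) :
    (∀ m n : ℕ, 1 ≤ m → m ≤ n → g m ≤ g n) ∧
    Tendsto (fun n : ℕ => a n - g n) atTop (nhds 0) ∧
    ∃ γ : ℝ, Tendsto a atTop (nhds γ) ∧ Tendsto g atTop (nhds γ) ∧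
      -Real.log (φ 1) ≤ γ ∧ γ ≤ φ' 1 / φ 1 - Real.log (φ 1) := by
  obtain ⟨R⟩ := hφ
  have hpos : ∀ u, 0 < u → 0 < φ u := fun u hu => R.pos_of_nonzero hnz hu
  set c : ℝ → ℝ := fun x => φ' x / φ x
  set L : ℝ → ℝ := fun x => log (φ x)
  have hconc : ConcaveOn ℝ (Ioi 0) φ := R.concaveOn.subset Ioi_subset_Ici_self (convex_Ioi 0)
  have hstep : ∀ k : ℕ, 1 ≤ k → c (k + 1) ≤ L (k + 1) - L k ∧ L (k + 1) - L k ≤ c k :=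
    fun k hk => hconc.logDeriv_add_one_le_log_sub_le hpos hderiv (Nat.cast_pos.2 hk)
  have hc : Tendsto (fun n : ℕ => c n) atTop (𝓝 0) :=
    R.concaveOn.tendsto_logDeriv_natCast R.monotoneOn (R.apply_zero ▸ R.k_nonneg) hpos hderiv
  obtain rfl : a = _ := funext ha
  obtain rfl : g = _ := funext hg
  obtain ⟨γ, hγa, hγg, hγ⟩ := exists_tendsto_sum_sub hstep hc
  refine ⟨fun m n _ hmn => monotone_sum_sub_succ hstep hmn, ?_, γ, hγa, hγg, hγ⟩
  simpa only [sub_sub_sub_cancel_left] using tendsto_add_one_sub hstep hc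

end
end

section
/- Let φ be a nonzero Bernstein function with lim_{u→∞} φ(u) = ∞ whose Lévy measure has a non-increasing density, let k = φ(0), and let ϕ : [k,∞) → [0,∞) be the continuous inverse of φ. Define G : [1,∞) → ℝ by G(u) = ∫_1^u log φ(r) dr + log φ(1). Then for every y ≥ log φ(1), the supremum sup_{u ≥ 1} (u·y − G(u)) is attained at u = ϕ(e^y) and equals ∫_k^{e^y} ϕ(r)/r dr − ∫_k^{φ(1)} ϕ(r)/r dr. -/
/-!
Since `log ∘ φ` is nondecreasing, `G` is convex on `[1,∞)` with `G' = log ∘ φ`, so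
`u ↦ u y - G u` is maximal where `log φ(u) = y`, i.e. at `x = ϕ(e^y)`. There, Young's equality
for the increasing function `log ∘ φ` on `[1, x]` and its inverse `t ↦ ϕ(e^t)` gives
`x y - G x = ∫_{log φ(1)}^{y} ϕ(e^t) dt`, which is `∫_{φ(1)}^{e^y} ϕ(r)/r dr` after `r = e^t`.

Young's equality `∫_a^b f + ∫_{f a}^{f b} f⁻¹ = b f(b) - a f(a)` holds because
`h(s) = ∫_a^s f + ∫_{f a}^{f s} f⁻¹ - s f(s)` satisfies `|h t - h s| ≤ (t - s)(f t - f s)`,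
which telescopes to `0` along ever finer partitions of `[a, b]`.

A Bernstein function satisfies `u φ(w) ≤ w φ(u)` for `0 ≤ u ≤ w`, so `ϕ(r)/r` is nondecreasing
on `[φ(0), ∞)`; this gives the integrability of `ϕ(r)/r` down to `φ(0)`.
-/

open MeasureTheory Filter Topology Set
open scoped ENNReal

noncomputable section

theorem eq_of_abs_sub_le_sub_mul_sub {h ω : ℝ → ℝ} {a b : ℝ} (hab : a ≤ b)
    (hh : ∀ s ∈ Icc a b, ∀ t ∈ Icc a b, s ≤ t →
      |h t - h s| ≤ (t - s) * (ω t - ω s)) :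
    h b = h a := by
  have hstep : ∀ n : ℕ, 0 < n → |h b - h a| ≤ (b - a) * (ω b - ω a) / n := by
    intro n hn
    have hn' : (0 : ℝ) < n := Nat.cast_pos.2 hn
    set δ := (b - a) / n
    set p : ℕ → ℝ := fun i => a + i * δ
    have hδ : 0 ≤ δ := div_nonneg (sub_nonneg.2 hab) hn'.le
    have hpn : p n = b := by simp only [p, δ]; field_simp; ring
    have hp : ∀ i ≤ n, p i ∈ Icc a b := fun i hi => by
      refine ⟨le_add_of_nonneg_right (mul_nonneg i.cast_nonneg hδ), ?_⟩
      rw [← hpn]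
      exact add_le_add_right (mul_le_mul_of_nonneg_right (Nat.cast_le.2 hi) hδ) a
    calc |h b - h a| = |∑ i ∈ Finset.range n, (h (p (i + 1)) - h (p i))| := by
          rw [Finset.sum_range_sub (fun i => h (p i)), hpn]; simp [p]
      _ ≤ ∑ i ∈ Finset.range n, |h (p (i + 1)) - h (p i)| := Finset.abs_sum_le_sum_abs _ _
      _ ≤ ∑ i ∈ Finset.range n, δ * (ω (p (i + 1)) - ω (p i)) := by
          refine Finset.sum_le_sum fun i hi => ?_
          have hi := Finset.mem_range.1 hi
          have hpi : p (i + 1) - p i = δ := by simp only [p]; push_cast; ring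
          simpa only [hpi] using hh _ (hp i hi.le) _ (hp (i + 1) hi) (by linarith)
      _ = (b - a) * (ω b - ω a) / n := by
          rw [← Finset.mul_sum, Finset.sum_range_sub (fun i => ω (p i)), hpn]
          simp only [p, Nat.cast_zero, zero_mul, add_zero]
          ring
  have hlim : Tendsto (fun n : ℕ => (b - a) * (ω b - ω a) / n) atTop (𝓝 0) :=
    tendsto_const_div_atTop_nhds_zero_nat _
  have hle := ge_of_tendsto hlim ((eventually_gt_atTop 0).mono hstep)
  exact sub_eq_zero.1 (abs_nonpos_iff.1 hle)

theorem MonotoneOn.sub_mul_le_integral {f : ℝ → ℝ} {a b : ℝ} (hab : a ≤ b)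
    (hf : MonotoneOn f (Icc a b)) : (b - a) * f a ≤ ∫ s in a..b, f s := by
  calc (b - a) * f a = ∫ _ in a..b, f a := by simp
    _ ≤ ∫ s in a..b, f s :=
      intervalIntegral.integral_mono_on hab (by simp) (uIcc_of_le hab ▸ hf).intervalIntegrable
        fun s hs => hf ⟨le_rfl, hab⟩ hs hs.1

theorem MonotoneOn.integral_le_sub_mul {f : ℝ → ℝ} {a b : ℝ} (hab : a ≤ b)
    (hf : MonotoneOn f (Icc a b)) : ∫ s in a..b, f s ≤ (b - a) * f b := by
  calc ∫ s in a..b, f s ≤ ∫ _ in a..b, f b :=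
      intervalIntegral.integral_mono_on hab (uIcc_of_le hab ▸ hf).intervalIntegrable (by simp)
        fun s hs => hf hs ⟨hab, le_rfl⟩ hs.2
    _ = (b - a) * f b := by simp

theorem uIcc_subset_Ici_of_le {α : Type*} [Lattice α] {a b c : α} (ha : c ≤ a) (hb : c ≤ b) :
    uIcc a b ⊆ Ici c :=
  fun _ hr => (le_inf ha hb).trans hr.1

theorem sub_mul_le_integral_of_monotoneOn {f : ℝ → ℝ} {a b : ℝ}
    (hf : MonotoneOn f (uIcc a b)) : (b - a) * f a ≤ ∫ s in a..b, f s := by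
  rcases le_total a b with hab | hba
  · exact MonotoneOn.sub_mul_le_integral hab (uIcc_of_le hab ▸ hf)
  · have := MonotoneOn.integral_le_sub_mul hba (uIcc_of_ge hba ▸ hf)
    rw [intervalIntegral.integral_symm]
    linarith

theorem mul_sub_integral_le_of_monotoneOn {F : ℝ → ℝ} {a x u : ℝ}
    (hF : MonotoneOn F (Ici a)) (hx : a ≤ x) (hu : a ≤ u) :
    u * F x - ∫ r in a..u, F r ≤ x * F x - ∫ r in a..x, F r := by
  have hsupport := sub_mul_le_integral_of_monotoneOn (hF.mono (uIcc_subset_Ici_of_le hx hu))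
  have hsplit := intervalIntegral.integral_interval_sub_left
    (hF.mono (uIcc_subset_Ici_of_le le_rfl hu)).intervalIntegrable (μ := volume)
    (hF.mono (uIcc_subset_Ici_of_le le_rfl hx)).intervalIntegrable
  linarith

theorem integral_add_integral_eq_of_leftInvOn {f g : ℝ → ℝ} {a b : ℝ} (hab : a ≤ b)
    (hf : MonotoneOn f (Icc a b)) (hg : MonotoneOn g (Icc (f a) (f b)))
    (hgf : LeftInvOn g f (Icc a b)) :
    (∫ s in a..b, f s) + ∫ t in f a..f b, g t = b * f b - a * f a := by
  set h : ℝ → ℝ := fun s => (∫ r in a..s, f r) + (∫ t in f a..f s, g t) - s * f s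
  suffices h b = h a by simp only [h, intervalIntegral.integral_same] at this; linarith
  refine eq_of_abs_sub_le_sub_mul_sub (ω := f) hab fun s hs s' hs' hss' => ?_
  have hfa : ∀ r ∈ Icc a b, f a ≤ f r := fun r hr => hf ⟨le_rfl, hab⟩ hr hr.1
  have hfb : ∀ r ∈ Icc a b, f r ≤ f b := fun r hr => hf hr ⟨hab, le_rfl⟩ hr.2
  have hf_int : ∀ r ∈ Icc a b, IntervalIntegrable f volume a r := fun r hr =>
    (hf.mono (uIcc_of_le hr.1 ▸ Icc_subset_Icc_right hr.2)).intervalIntegrable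
  have hg_int : ∀ r ∈ Icc a b, IntervalIntegrable g volume (f a) (f r) := fun r hr =>
    (hg.mono (uIcc_of_le (hfa r hr) ▸ Icc_subset_Icc_right (hfb r hr))).intervalIntegrable
  have hfs : f s ≤ f s' := hf hs hs' hss'
  have hf_ss' : MonotoneOn f (Icc s s') := hf.mono (Icc_subset_Icc hs.1 hs'.2)
  have hg_ss' : MonotoneOn g (Icc (f s) (f s')) :=
    hg.mono (Icc_subset_Icc (hfa s hs) (hfb s' hs'))
  have hf_lower := hf_ss'.sub_mul_le_integral hss'
  have hf_upper := hf_ss'.integral_le_sub_mul hss'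
  have hg_lower := hg_ss'.sub_mul_le_integral hfs
  have hg_upper := hg_ss'.integral_le_sub_mul hfs
  rw [hgf hs] at hg_lower
  rw [hgf hs'] at hg_upper
  have hf_split := intervalIntegral.integral_interval_sub_left (hf_int s' hs') (hf_int s hs)
  have hg_split := intervalIntegral.integral_interval_sub_left (hg_int s' hs') (hg_int s hs)
  rw [abs_sub_le_iff]
  constructor <;> · simp only [h]; linarith

theorem integral_comp_exp (g : ℝ → ℝ) (a b : ℝ) :
    ∫ t in a..b, g (Real.exp t) = ∫ r in Real.exp a..Real.exp b, g r / r := by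
  wlog hab : a ≤ b generalizing a b
  · rw [intervalIntegral.integral_symm, this b a (le_of_not_ge hab),
      intervalIntegral.integral_symm, neg_neg]
  rw [intervalIntegral.integral_of_le hab,
    intervalIntegral.integral_of_le (Real.exp_le_exp.2 hab), ← Real.image_exp_Ioc,
    integral_image_eq_integral_abs_deriv_smul measurableSet_Ioc
      (fun t _ => (Real.hasDerivAt_exp t).hasDerivWithinAt) Real.exp_injective.injOn]
  refine setIntegral_congr_fun measurableSet_Ioc fun t _ => ?_
  rw [abs_of_pos (Real.exp_pos t), smul_eq_mul, mul_div_cancel₀ _ (Real.exp_ne_zero t)]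

theorem monotoneOn_log_comp {φ : ℝ → ℝ} {a : ℝ} (hφ : MonotoneOn φ (Ici a)) (ha : 0 < φ a) :
    MonotoneOn (fun r => Real.log (φ r)) (Ici a) := fun _ hr _ hs hrs =>
  Real.log_le_log (ha.trans_le (hφ self_mem_Ici hr hr)) (hφ hr hs hrs)

theorem mul_log_sub_integral_log_eq {φ ϕ : ℝ → ℝ} {x : ℝ} (hx : 1 ≤ x)
    (hφ : MonotoneOn φ (Ici 1)) (h1 : 0 < φ 1) (hϕ : MonotoneOn ϕ (Icc (φ 1) (φ x)))
    (hinv : LeftInvOn ϕ φ (Icc 1 x)) :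
    x * Real.log (φ x) - ∫ r in (1 : ℝ)..x, Real.log (φ r)
      = Real.log (φ 1) + ∫ r in φ 1..φ x, ϕ r / r := by
  have hpos : ∀ s ∈ Ici 1, 0 < φ s := fun s hs => h1.trans_le (hφ self_mem_Ici hs hs)
  have hexp_mem :
      ∀ t ∈ Icc (Real.log (φ 1)) (Real.log (φ x)), Real.exp t ∈ Icc (φ 1) (φ x) := fun t ht =>
    ⟨(Real.log_le_iff_le_exp h1).1 ht.1, (Real.le_log_iff_exp_le (hpos x hx)).1 ht.2⟩
  have hyoung := integral_add_integral_eq_of_leftInvOn (f := fun r => Real.log (φ r))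
    (g := fun t => ϕ (Real.exp t)) hx ((monotoneOn_log_comp hφ h1).mono Icc_subset_Ici_self)
    (fun a ha b hb hab => hϕ (hexp_mem a ha) (hexp_mem b hb) (Real.exp_le_exp.2 hab))
    (fun s hs => by simp only [Real.exp_log (hpos s hs.1), hinv hs])
  rw [integral_comp_exp, Real.exp_log h1, Real.exp_log (hpos x hx)] at hyoung
  linarith

theorem MonotoneOn.monotoneOn_of_rightInvOn {α β : Type*} [LinearOrder α] [PartialOrder β]
    {f : α → β} {g : β → α} {s : Set α} {t : Set β} (hf : MonotoneOn f s)
    (hg : MapsTo g t s) (hgf : RightInvOn g f t) : MonotoneOn g t := by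
  intro a ha b hb hab
  by_contra! hlt
  have hba : b ≤ a := hgf hb ▸ hgf ha ▸ hf (hg hb) (hg ha) hlt.le
  exact hlt.ne (congrArg g (le_antisymm hab hba)).symm

theorem monotoneOn_div_of_rightInvOn {φ ϕ : ℝ → ℝ} (h0 : 0 ≤ φ 0)
    (hφ : MonotoneOn φ (Ici 0)) (hsub : ∀ u w, 0 ≤ u → u ≤ w → u * φ w ≤ w * φ u)
    (hmaps : MapsTo ϕ (Ici (φ 0)) (Ici 0)) (hinv : RightInvOn ϕ φ (Ici (φ 0))) :
    MonotoneOn (fun r => ϕ r / r) (Ici (φ 0)) := by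
  intro r hr s hs hrs
  have hr0 : 0 ≤ r := h0.trans hr
  obtain rfl | hr0 := hr0.eq_or_lt
  · simpa using div_nonneg (hmaps hs) (hr0.trans hrs)
  have hϕ := hφ.monotoneOn_of_rightInvOn hmaps hinv hr hs hrs
  rw [div_le_div_iff₀ hr0 (hr0.trans_le hrs)]
  nth_rw 1 [← hinv hs]
  nth_rw 2 [← hinv hr]
  exact hsub _ _ (hmaps hr) hϕ

theorem mul_one_sub_exp_neg_le {u w : ℝ} (hu : 0 ≤ u) (huw : u ≤ w) (t : ℝ) :
    u * (1 - Real.exp (-(w * t))) ≤ w * (1 - Real.exp (-(u * t))) := by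
  obtain rfl | hw := (hu.trans huw).eq_or_lt
  · simp [le_antisymm huw hu]
  have hconv := convexOn_exp.2 (mem_univ (-(w * t))) (mem_univ 0) (div_nonneg hu hw.le)
    (sub_nonneg.2 ((div_le_one hw).2 huw)) (by ring)
  have hexp : (u / w) • -(w * t) + (1 - u / w) • (0 : ℝ) = -(u * t) := by
    simp only [smul_eq_mul, mul_zero, add_zero]; field_simp
  rw [hexp, smul_eq_mul, smul_eq_mul, Real.exp_zero, mul_one] at hconv
  have := mul_le_mul_of_nonneg_left hconv hw.le
  rw [mul_add, ← mul_assoc, mul_div_cancel₀ _ hw.ne', mul_sub, mul_one,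
    mul_div_cancel₀ _ hw.ne'] at this
  linarith

theorem one_sub_exp_neg_le_min (s : ℝ) : 1 - Real.exp (-s) ≤ min 1 s :=
  le_min (by linarith [Real.exp_pos (-s)]) (by linarith [Real.add_one_le_exp (-s)])

namespace BernsteinJRep

variable {φ : ℝ → ℝ}

theorem aemeasurable_v (R : BernsteinJRep φ) : AEMeasurable R.v (volume.restrict (Ioi 0)) :=
  aemeasurable_restrict_of_antitoneOn measurableSet_Ioi fun _ ha _ _ hab => R.v_anti _ _ ha hab

theorem min_mul_v_nonneg (R : BernsteinJRep φ) {y : ℝ} (hy : 0 < y) : 0 ≤ min 1 y * R.v y :=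
  mul_nonneg (le_min zero_le_one hy.le) (R.v_nonneg y hy)

theorem integrableOn_min_mul_v (R : BernsteinJRep φ) :
    IntegrableOn (fun y => min 1 y * R.v y) (Ioi 0) := by
  have hnn : 0 ≤ᵐ[volume.restrict (Ioi 0)] fun y => min 1 y * R.v y := by
    filter_upwards [ae_restrict_mem measurableSet_Ioi] with y hy using R.min_mul_v_nonneg hy
  exact ⟨((measurable_const.min measurable_id).aemeasurable.mul R.aemeasurable_v)
    |>.aestronglyMeasurable, (hasFiniteIntegral_iff_ofReal hnn).2 R.levy⟩

theorem aestronglyMeasurable_integrand (R : BernsteinJRep φ) (u : ℝ) :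
    AEStronglyMeasurable (fun y => (1 - Real.exp (-(u * y))) * R.v y)
      (volume.restrict (Ioi 0)) :=
  ((by fun_prop : Continuous fun y => 1 - Real.exp (-(u * y))).aemeasurable.mul
    R.aemeasurable_v).aestronglyMeasurable

theorem norm_integrand_le (R : BernsteinJRep φ) {u y : ℝ} (hu : 0 ≤ u) (hy : 0 < y) :
    ‖(1 - Real.exp (-(u * y))) * R.v y‖ ≤ max 1 u * (min 1 y * R.v y) := by
  have hexp : 0 ≤ 1 - Real.exp (-(u * y)) :=
    sub_nonneg.2 (Real.exp_le_one_iff.2 (neg_nonpos.2 (mul_nonneg hu hy.le)))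
  have hmin : min 1 (u * y) ≤ max 1 u * min 1 y := by
    rcases le_total y 1 with h | h
    · rw [min_eq_right h]
      exact (min_le_right _ _).trans (mul_le_mul_of_nonneg_right (le_max_right 1 u) hy.le)
    · rw [min_eq_left h, mul_one]
      exact (min_le_left _ _).trans (le_max_left 1 u)
  rw [Real.norm_of_nonneg (mul_nonneg hexp (R.v_nonneg y hy)), ← mul_assoc]
  exact mul_le_mul_of_nonneg_right ((one_sub_exp_neg_le_min _).trans hmin)
    (R.v_nonneg y hy)

theorem integrableOn_integrand (R : BernsteinJRep φ) {u : ℝ} (hu : 0 ≤ u) :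
    IntegrableOn (fun y => (1 - Real.exp (-(u * y))) * R.v y) (Ioi 0) := by
  refine (R.integrableOn_min_mul_v.const_mul (max 1 u)).mono'
    (R.aestronglyMeasurable_integrand u) ?_
  filter_upwards [ae_restrict_mem measurableSet_Ioi] with y hy using R.norm_integrand_le hu hy

theorem apply_zero (R : BernsteinJRep φ) : φ 0 = R.k := by
  simp [R.eq 0 le_rfl]

theorem monotoneOn (R : BernsteinJRep φ) : MonotoneOn φ (Ici 0) := by
  intro a ha b hb hab
  rw [R.eq a ha, R.eq b hb]
  have hint : (∫ y in Ioi 0, (1 - Real.exp (-(a * y))) * R.v y)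
      ≤ ∫ y in Ioi 0, (1 - Real.exp (-(b * y))) * R.v y := by
    refine integral_mono_ae (R.integrableOn_integrand ha) (R.integrableOn_integrand hb) ?_
    filter_upwards [ae_restrict_mem measurableSet_Ioi] with y hy
    have : Real.exp (-(b * y)) ≤ Real.exp (-(a * y)) :=
      Real.exp_le_exp.2 (neg_le_neg (mul_le_mul_of_nonneg_right hab (le_of_lt hy)))
    exact mul_le_mul_of_nonneg_right (by linarith) (R.v_nonneg y hy)
  nlinarith [R.d_nonneg]

theorem continuousOn (R : BernsteinJRep φ) : ContinuousOn φ (Ici 0) := by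
  have hint : ContinuousOn (fun u => ∫ y in Ioi 0, (1 - Real.exp (-(u * y))) * R.v y)
      (Ici 0) := fun u₀ _ => by
    refine continuousWithinAt_of_dominated
      (bound := fun y => max 1 (u₀ + 1) * (min 1 y * R.v y))
      (Eventually.of_forall R.aestronglyMeasurable_integrand) ?_
      (R.integrableOn_min_mul_v.const_mul _)
      (ae_of_all _ fun y => (by fun_prop : Continuous fun u =>
        (1 - Real.exp (-(u * y))) * R.v y).continuousWithinAt)
    filter_upwards [self_mem_nhdsWithin,
      mem_nhdsWithin_of_mem_nhds (Iic_mem_nhds (lt_add_one u₀))] with u hu hu'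
    filter_upwards [ae_restrict_mem measurableSet_Ioi] with y hy
    exact (R.norm_integrand_le hu hy).trans
      (mul_le_mul_of_nonneg_right (max_le_max le_rfl hu') (R.min_mul_v_nonneg hy))
  exact ((continuousOn_const.add (continuousOn_const.mul continuousOn_id)).add hint).congr
    fun u hu => R.eq u hu

theorem mul_apply_le_mul_apply (R : BernsteinJRep φ) {u w : ℝ} (hu : 0 ≤ u) (huw : u ≤ w) :
    u * φ w ≤ w * φ u := by
  rw [R.eq w (hu.trans huw), R.eq u hu]
  have hint : u * (∫ y in Ioi 0, (1 - Real.exp (-(w * y))) * R.v y)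
      ≤ w * ∫ y in Ioi 0, (1 - Real.exp (-(u * y))) * R.v y := by
    rw [← integral_const_mul, ← integral_const_mul]
    refine integral_mono_ae ((R.integrableOn_integrand (hu.trans huw)).const_mul u)
      ((R.integrableOn_integrand hu).const_mul w) ?_
    filter_upwards [ae_restrict_mem measurableSet_Ioi] with y hy
    rw [← mul_assoc, ← mul_assoc]
    exact mul_le_mul_of_nonneg_right (mul_one_sub_exp_neg_le hu huw y) (R.v_nonneg y hy)
  nlinarith [mul_nonneg (sub_nonneg.2 huw) R.k_nonneg]

end BernsteinJRep

theorem bernstein_legendre_transform_general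
    (φ ϕ : ℝ → ℝ) (repJ : BernsteinJRep φ)
    (hφtop : Tendsto φ atTop atTop)
    (hinv₁ : ∀ u : ℝ, 0 ≤ u → ϕ (φ u) = u)
    (G : ℝ → ℝ)
    (hG : ∀ u : ℝ, G u = (∫ r in (1:ℝ)..u, Real.log (φ r)) + Real.log (φ 1))
    (y : ℝ) (hy : Real.log (φ 1) ≤ y) :
    1 ≤ ϕ (Real.exp y) ∧
    (∀ u : ℝ, 1 ≤ u → u * y - G u ≤ ϕ (Real.exp y) * y - G (ϕ (Real.exp y))) ∧
    ϕ (Real.exp y) * y - G (ϕ (Real.exp y)) =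
      (∫ r in (φ 0)..(Real.exp y), ϕ r / r) - ∫ r in (φ 0)..(φ 1), ϕ r / r := by
  have hleft : LeftInvOn ϕ φ (Ici 0) := hinv₁
  have hφ := repJ.monotoneOn
  have hsurj : SurjOn φ (Ici 0) (Ici (φ 0)) := intermediate_value_Ici repJ.continuousOn hφtop
  have hmaps : MapsTo ϕ (Ici (φ 0)) (Ici 0) := hleft.mapsTo hsurj
  have hright : RightInvOn ϕ φ (Ici (φ 0)) := hsurj.leftInvOn_of_rightInvOn hleft
  have hϕ := hφ.monotoneOn_of_rightInvOn hmaps hright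
  have h0 : 0 ≤ φ 0 := repJ.apply_zero ▸ repJ.k_nonneg
  have hIci : Ici (1 : ℝ) ⊆ Ici 0 := Ici_subset_Ici.2 zero_le_one
  have h01 : φ 0 < φ 1 := (hφ self_mem_Ici (hIci self_mem_Ici) zero_le_one).lt_of_ne
    fun h => zero_ne_one (hleft.injOn self_mem_Ici (hIci self_mem_Ici) h)
  have h1 : 0 < φ 1 := h0.trans_lt h01
  have hφ1 : φ 1 ≤ Real.exp y := (Real.log_le_iff_le_exp h1).1 hy
  have hφ0 : φ 0 ≤ Real.exp y := h01.le.trans hφ1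
  set x := ϕ (Real.exp y)
  have hx : 1 ≤ x := hleft (hIci self_mem_Ici) ▸ hϕ h01.le hφ0 hφ1
  have hlogφx : Real.log (φ x) = y := by rw [hright hφ0, Real.log_exp]
  refine ⟨hx, fun u hu => ?_, ?_⟩
  · have hmax :=
      mul_sub_integral_le_of_monotoneOn (monotoneOn_log_comp (hφ.mono hIci) h1) hx hu
    rw [hlogφx] at hmax
    rw [hG u, hG x]
    linarith
  · have hval := mul_log_sub_integral_log_eq hx (hφ.mono hIci) h1
      (hϕ.mono (Icc_subset_Ici_self.trans (Ici_subset_Ici.2 h01.le)))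
      (hleft.mono (Icc_subset_Ici_self.trans hIci))
    have hdiv := monotoneOn_div_of_rightInvOn h0 hφ (fun _ _ => repJ.mul_apply_le_mul_apply)
      hmaps hright
    rw [hlogφx, hright hφ0] at hval
    rw [intervalIntegral.integral_interval_sub_left
      (hdiv.mono (uIcc_subset_Ici_of_le le_rfl hφ0)).intervalIntegrable
      (hdiv.mono (uIcc_subset_Ici_of_le le_rfl h01.le)).intervalIntegrable, hG x]
    linarith

/-- For an unbounded Jurek-class Bernstein function `φ` with inverse `ϕ` and
`G(u) = ∫_1^u log φ(r) dr + log φ(1)`, for every `y ≥ log φ(1)` the supremum of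
`u·y − G(u)` over `u ≥ 1` is attained at `u = ϕ(e^y)` and equals
`∫_k^{e^y} ϕ(r)/r dr − ∫_k^{φ(1)} ϕ(r)/r dr` where `k = φ(0)`. -/
theorem bernstein_legendre_transform
    (φ ϕ : ℝ → ℝ) (repJ : BernsteinJRep φ) (hnz : BernsteinNonzero φ)
    (hφtop : Tendsto φ atTop atTop)
    (hinv₁ : ∀ u : ℝ, 0 ≤ u → ϕ (φ u) = u)
    (hinv₂ : ∀ x : ℝ, φ 0 ≤ x → φ (ϕ x) = x)
    (G : ℝ → ℝ)
    (hG : ∀ u : ℝ, G u = (∫ r in (1:ℝ)..u, Real.log (φ r)) + Real.log (φ 1))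
    (y : ℝ) (hy : Real.log (φ 1) ≤ y) :
    1 ≤ ϕ (Real.exp y) ∧
    (∀ u : ℝ, 1 ≤ u → u * y - G u ≤ ϕ (Real.exp y) * y - G (ϕ (Real.exp y))) ∧
    ϕ (Real.exp y) * y - G (ϕ (Real.exp y)) =
      (∫ r in (φ 0)..(Real.exp y), ϕ r / r) - ∫ r in (φ 0)..(φ 1), ϕ r / r :=
  bernstein_legendre_transform_general φ ϕ repJ hφtop hinv₁ G hG y hy

end
end

section
/- Let a ∈ ℝ and let ψ₁, ψ₂ : ℝ → ℝ be measurable functions, differentiable on (a,∞), such that ψ₁'(y) → ∞ and ψ₂'(y) → ∞ as y → ∞ and such that e^{−ψ₁} and e^{−ψ₂} are integrable on ℝ. Let f, g ∈ L¹(ℝ) satisfy lim_{y→∞} f(y)·e^{ψ₁(y)} = 1 and lim_{y→∞} g(y)·e^{ψ₂(y)} = 1. Then lim_{x→∞} (f*g)(x) / (e^{−ψ₁} * e^{−ψ₂})(x) = 1, where (f*g)(x) = ∫_ℝ f(x−y) g(y) dy denotes additive convolution. -/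
/-! Since `ψᵢ' → ∞`, the mean value theorem gives `ψᵢ(x + 1) - ψᵢ(x) → ∞`, so the kernels
`Eᵢ = e^{-ψᵢ}` satisfy `Eᵢ(x + 1) = o(Eᵢ(x))`. Restricting the integral defining `E₁ * E₂` to a
unit window shows `E₁(x - s) = O((E₁ * E₂)(x))` for large `s`, hence `Eᵢ(x - T) = o((E₁ * E₂)(x))`
for every fixed `T`. Now `f * g - E₁ * E₂ = f * (g - E₂) + (f - E₁) * E₂` with `f = O(E₁)` and
`g - E₂ = o(E₂)`; splitting `∫ f(x - t) (g - E₂)(t) dt` at `t = T` and `t = x - T` bounds it by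
`o(1) · (E₁ * E₂)(x)` plus multiples of `E₁(x - T)` and `E₂(x - T)`. -/

open MeasureTheory Filter Topology Set Asymptotics
open scoped Convolution
open ContinuousLinearMap (mul)

/-- The model is `e^{-ψ}` with `ψ' → ∞`. -/
structure SuperexpDecay (E : ℝ → ℝ) : Prop where
  pos : ∀ x, 0 < E x
  integrable : Integrable E
  eventually_antitoneOn : ∀ᶠ b in atTop, AntitoneOn E (Ici b)
  comp_add_one_isLittleO : (fun x => E (x + 1)) =o[atTop] E

section DerivTendstoAtTop

variable {ψ : ℝ → ℝ}

theorem eventually_monotoneOn_Ici_of_tendsto_deriv (hd : ∀ᶠ y in atTop, DifferentiableAt ℝ ψ y)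
    (hψ : Tendsto (deriv ψ) atTop atTop) : ∀ᶠ b in atTop, MonotoneOn ψ (Ici b) := by
  obtain ⟨b₀, hb₀⟩ := eventually_atTop.1 (hd.and (hψ.eventually_ge_atTop 0))
  filter_upwards [eventually_ge_atTop b₀] with b hb
  refine monotoneOn_of_deriv_nonneg (convex_Ici b)
    (fun y hy => (hb₀ y (hb.trans hy)).1.continuousAt.continuousWithinAt) ?_ ?_ <;>
    rw [interior_Ici]
  · exact fun y hy => (hb₀ y (hb.trans hy.le)).1.differentiableWithinAt
  · exact fun y hy => (hb₀ y (hb.trans hy.le)).2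

theorem tendsto_sub_comp_add_one_of_tendsto_deriv (hd : ∀ᶠ y in atTop, DifferentiableAt ℝ ψ y)
    (hψ : Tendsto (deriv ψ) atTop atTop) : Tendsto (fun x => ψ (x + 1) - ψ x) atTop atTop := by
  refine tendsto_atTop.2 fun K => ?_
  obtain ⟨b, hb⟩ := eventually_atTop.1 (hd.and (hψ.eventually_ge_atTop K))
  filter_upwards [eventually_ge_atTop b] with x hx
  obtain ⟨p, hp, hslope⟩ := exists_deriv_eq_slope ψ (lt_add_one x)
    (fun y hy => (hb y (hx.trans hy.1)).1.continuousAt.continuousWithinAt)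
    (fun y hy => (hb y (hx.trans hy.1.le)).1.differentiableWithinAt)
  have hK := (hb p (hx.trans hp.1.le)).2
  rwa [hslope, add_sub_cancel_left, div_one] at hK

theorem SuperexpDecay.exp_neg (hd : ∀ᶠ y in atTop, DifferentiableAt ℝ ψ y)
    (hψ : Tendsto (deriv ψ) atTop atTop) (hi : Integrable fun y => Real.exp (-ψ y)) :
    SuperexpDecay fun y => Real.exp (-ψ y) where
  pos _ := Real.exp_pos _
  integrable := hi
  eventually_antitoneOn := (eventually_monotoneOn_Ici_of_tendsto_deriv hd hψ).mono
    fun _ hb _ hx _ hy hxy => Real.exp_le_exp.2 (neg_le_neg (hb hx hy hxy))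
  comp_add_one_isLittleO := by
    refine (isLittleO_iff_tendsto fun _ h => absurd h (Real.exp_pos _).ne').2 ?_
    refine (Real.tendsto_exp_neg_atTop_nhds_zero.comp
      (tendsto_sub_comp_add_one_of_tendsto_deriv hd hψ)).congr fun x => ?_
    simp only [Function.comp_apply, ← Real.exp_sub]
    ring_nf

end DerivTendstoAtTop

theorem isEquivalent_exp_neg_of_tendsto {f ψ : ℝ → ℝ} {l : Filter ℝ}
    (h : Tendsto (fun y => f y * Real.exp (ψ y)) l (𝓝 1)) : f ~[l] fun y => Real.exp (-ψ y) :=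
  isEquivalent_of_tendsto_one (h.congr fun y => by simp [div_eq_mul_inv, Real.exp_neg])

theorem convolution_mul_comm (u v : ℝ → ℝ) : u ⋆[mul ℝ ℝ] v = v ⋆[mul ℝ ℝ] u := by
  rw [← convolution_flip, ContinuousLinearMap.flip_mul]

theorem eventually_convolutionExistsAt_of_isBigO_one {u v : ℝ → ℝ} (hu : Integrable u)
    (hv : Integrable v) (hu1 : u =O[atTop] fun _ => (1 : ℝ)) (hv1 : v =O[atTop] fun _ => (1 : ℝ)) :
    ∀ᶠ x in atTop, ConvolutionExistsAt u v x (mul ℝ ℝ) := by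
  obtain ⟨C₁, hC₁⟩ := hu1.bound
  obtain ⟨C₂, hC₂⟩ := hv1.bound
  obtain ⟨b, hb⟩ := eventually_atTop.1 (hC₁.and hC₂)
  simp only [norm_one, mul_one, Real.norm_eq_abs] at hb
  filter_upwards [eventually_ge_atTop (b + b)] with x hx
  have hvx : Integrable fun t => v (x - t) := hv.comp_sub_left x
  refine ((hu.abs.const_mul C₂).add (hvx.abs.const_mul C₁)).mono'
    (hu.aestronglyMeasurable.mul hvx.aestronglyMeasurable) (.of_forall fun t => ?_)
  have hC₁ : 0 ≤ C₁ := (abs_nonneg _).trans (hb b le_rfl).1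
  have hC₂ : 0 ≤ C₂ := (abs_nonneg _).trans (hb b le_rfl).2
  rw [Pi.add_apply, ContinuousLinearMap.mul_apply', Real.norm_eq_abs, abs_mul]
  rcases le_or_gt b t with ht | ht
  · nlinarith [(hb t ht).1, abs_nonneg (u t), abs_nonneg (v (x - t))]
  · nlinarith [(hb (x - t) (by linarith)).2, abs_nonneg (u t), abs_nonneg (v (x - t))]

theorem convolution_nonneg {u v : ℝ → ℝ} (hu : ∀ z, 0 ≤ u z) (hv : ∀ z, 0 ≤ v z) (x : ℝ) :
    0 ≤ (u ⋆[mul ℝ ℝ] v) x :=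
  integral_nonneg fun t => mul_nonneg (hu t) (hv (x - t))

section TailBounds

variable {w h E₁ E₂ : ℝ → ℝ} {T C δ x : ℝ}

theorem abs_mul_comp_sub_le_of_tail_bounds (hE₁ : ∀ z, 0 ≤ E₁ z) (hE₂ : ∀ z, 0 ≤ E₂ z)
    (anti₁ : AntitoneOn E₁ (Ici T)) (anti₂ : AntitoneOn E₂ (Ici T)) (hC : 0 ≤ C) (hδ : 0 ≤ δ)
    (hwT : ∀ z, T ≤ z → |w z| ≤ C * E₁ z) (hhT : ∀ z, T ≤ z → |h z| ≤ δ * E₂ z)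
    (hx : T + T ≤ x) (t : ℝ) :
    |w (x - t) * h t| ≤ C * E₁ (x - T) * |h t| + C * δ * (E₁ (x - t) * E₂ t) +
      δ * E₂ (x - T) * |w (x - t)| := by
  have h₁ : 0 ≤ C * E₁ (x - T) * |h t| := by have := hE₁ (x - T); positivity
  have h₂ : 0 ≤ C * δ * (E₁ (x - t) * E₂ t) := by have := hE₁ (x - t); have := hE₂ t; positivity
  have h₃ : 0 ≤ δ * E₂ (x - T) * |w (x - t)| := by have := hE₂ (x - T); positivity
  rw [abs_mul]
  rcases le_or_gt t T with htT | hTt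
  · have hw : |w (x - t)| ≤ C * E₁ (x - T) := (hwT _ (by linarith)).trans
      (mul_le_mul_of_nonneg_left
        (anti₁ (mem_Ici.2 (by linarith)) (mem_Ici.2 (by linarith)) (by linarith)) hC)
    nlinarith [abs_nonneg (h t)]
  rcases le_or_gt t (x - T) with htx | hxt
  · calc |w (x - t)| * |h t| ≤ C * E₁ (x - t) * (δ * E₂ t) :=
          mul_le_mul (hwT _ (by linarith)) (hhT _ hTt.le) (abs_nonneg _)
            (mul_nonneg hC (hE₁ _))
      _ ≤ _ := by linarith
  · have hh : |h t| ≤ δ * E₂ (x - T) := (hhT _ hTt.le).trans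
      (mul_le_mul_of_nonneg_left
        (anti₂ (mem_Ici.2 (by linarith)) (mem_Ici.2 (by linarith)) hxt.le) hδ)
    nlinarith [abs_nonneg (w (x - t))]

theorem abs_convolution_le_of_tail_bounds (hw : Integrable w) (hh : Integrable h)
    (hE₁ : ∀ z, 0 ≤ E₁ z) (hE₂ : ∀ z, 0 ≤ E₂ z)
    (anti₁ : AntitoneOn E₁ (Ici T)) (anti₂ : AntitoneOn E₂ (Ici T)) (hC : 0 ≤ C) (hδ : 0 ≤ δ)
    (hwT : ∀ z, T ≤ z → |w z| ≤ C * E₁ z) (hhT : ∀ z, T ≤ z → |h z| ≤ δ * E₂ z)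
    (hD : ConvolutionExistsAt E₁ E₂ x (mul ℝ ℝ)) (hx : T + T ≤ x) :
    |(w ⋆[mul ℝ ℝ] h) x| ≤ C * (∫ t, |h t|) * E₁ (x - T) + C * δ * (E₁ ⋆[mul ℝ ℝ] E₂) x +
      δ * (∫ t, |w t|) * E₂ (x - T) := by
  have hint₁ : Integrable fun t => C * E₁ (x - T) * |h t| := hh.abs.const_mul _
  have hint₂ : Integrable fun t => C * δ * (E₁ (x - t) * E₂ t) :=
    hD.integrable_swap.const_mul _
  have hint₁₂ : Integrable fun t => C * E₁ (x - T) * |h t| + C * δ * (E₁ (x - t) * E₂ t) :=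
    hint₁.add hint₂
  have hint₃ : Integrable fun t => δ * E₂ (x - T) * |w (x - t)| :=
    (hw.comp_sub_left x).abs.const_mul _
  rw [convolution_mul_swap, convolution_mul_swap]
  calc |∫ t, w (x - t) * h t| ≤ ∫ t, |w (x - t) * h t| := by
        simpa only [Real.norm_eq_abs] using norm_integral_le_integral_norm fun t => w (x - t) * h t
    _ ≤ ∫ t, (C * E₁ (x - T) * |h t| + C * δ * (E₁ (x - t) * E₂ t) +
          δ * E₂ (x - T) * |w (x - t)|) :=
        integral_mono_of_nonneg (.of_forall fun _ => abs_nonneg _) (hint₁₂.add hint₃)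
          (.of_forall (abs_mul_comp_sub_le_of_tail_bounds hE₁ hE₂ anti₁ anti₂ hC hδ hwT hhT hx))
    _ = _ := by
        rw [integral_add hint₁₂ hint₃, integral_add hint₁ hint₂, integral_const_mul,
          integral_const_mul, integral_const_mul,
          integral_sub_left_eq_self (fun t => |w t|) volume x]
        ring

end TailBounds

namespace SuperexpDecay

variable {E₁ E₂ : ℝ → ℝ}

theorem isBigO_one (hE : SuperexpDecay E₁) : E₁ =O[atTop] fun _ => (1 : ℝ) := by
  obtain ⟨b, hb⟩ := hE.eventually_antitoneOn.exists
  refine IsBigO.of_bound (E₁ b) ((eventually_ge_atTop b).mono fun z hz => ?_)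
  rw [norm_one, mul_one, Real.norm_of_nonneg (hE.pos z).le]
  exact hb self_mem_Ici hz hz

theorem eventually_convolutionExistsAt (h₁ : SuperexpDecay E₁) (h₂ : SuperexpDecay E₂) :
    ∀ᶠ x in atTop, ConvolutionExistsAt E₁ E₂ x (mul ℝ ℝ) :=
  eventually_convolutionExistsAt_of_isBigO_one h₁.integrable h₂.integrable h₁.isBigO_one
    h₂.isBigO_one

theorem eventually_comp_sub_isBigO_convolution (h₁ : SuperexpDecay E₁) (h₂ : SuperexpDecay E₂) :
    ∀ᶠ s in atTop, (fun x => E₁ (x - s)) =O[atTop] (E₁ ⋆[mul ℝ ℝ] E₂) := by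
  filter_upwards [h₁.eventually_antitoneOn] with s hs
  set c := ∫ t in Ioc s (s + 1), E₂ t
  have hc : 0 < c := by
    rw [setIntegral_pos_iff_support_of_nonneg_ae (.of_forall fun t => (h₂.pos t).le)
      h₂.integrable.integrableOn, Function.support_eq_univ fun t => (h₂.pos t).ne',
      univ_inter, Real.volume_Ioc]
    norm_num
  refine IsBigO.of_bound c⁻¹ ?_
  filter_upwards [h₁.eventually_convolutionExistsAt h₂, eventually_ge_atTop (s + s + 1)]
    with x hD hx
  rw [Real.norm_of_nonneg (h₁.pos _).le, Real.norm_of_nonneg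
    (convolution_nonneg (fun z => (h₁.pos z).le) (fun z => (h₂.pos z).le) x),
    inv_mul_eq_div, le_div_iff₀ hc, convolution_mul_swap]
  calc E₁ (x - s) * c = ∫ t in Ioc s (s + 1), E₁ (x - s) * E₂ t := by
        rw [integral_const_mul]
    _ ≤ ∫ t in Ioc s (s + 1), E₁ (x - t) * E₂ t :=
        setIntegral_mono_on (h₂.integrable.integrableOn.const_mul _)
          hD.integrable_swap.integrableOn measurableSet_Ioc fun t ht =>
            mul_le_mul_of_nonneg_right
              (hs (mem_Ici.2 (by linarith [ht.2])) (mem_Ici.2 (by linarith [ht.2]))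
                (by linarith [ht.1]))
              (h₂.pos t).le
    _ ≤ ∫ t, E₁ (x - t) * E₂ t :=
        setIntegral_le_integral hD.integrable_swap
          (.of_forall fun t => mul_nonneg (h₁.pos _).le (h₂.pos t).le)

theorem eventually_convolution_pos (h₁ : SuperexpDecay E₁) (h₂ : SuperexpDecay E₂) :
    ∀ᶠ x in atTop, 0 < (E₁ ⋆[mul ℝ ℝ] E₂) x := by
  obtain ⟨s, hO⟩ := (h₁.eventually_comp_sub_isBigO_convolution h₂).exists
  filter_upwards [hO.eq_zero_imp] with x hx
  exact (convolution_nonneg (fun z => (h₁.pos z).le) (fun z => (h₂.pos z).le) x).lt_of_ne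
    fun h0 => (h₁.pos _).ne' (hx h0.symm)

theorem comp_sub_isLittleO_convolution (h₁ : SuperexpDecay E₁) (h₂ : SuperexpDecay E₂) (T : ℝ) :
    (fun x => E₁ (x - T)) =o[atTop] (E₁ ⋆[mul ℝ ℝ] E₂) := by
  obtain ⟨s, ⟨hanti, hO⟩, hTs⟩ := ((h₁.eventually_antitoneOn.and
    (h₁.eventually_comp_sub_isBigO_convolution h₂)).and (eventually_ge_atTop (T + 1))).exists
  have hshift : (fun x => E₁ (x - T)) =O[atTop] fun x => E₁ (x - s + 1) := by
    refine IsBigO.of_bound 1 ((eventually_ge_atTop (s + s)).mono fun x hx => ?_)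
    rw [one_mul, Real.norm_of_nonneg (h₁.pos _).le, Real.norm_of_nonneg (h₁.pos _).le]
    exact hanti (mem_Ici.2 (by linarith)) (mem_Ici.2 (by linarith)) (by linarith)
  have hstep : (fun x => E₁ (x - s + 1)) =o[atTop] fun x => E₁ (x - s) :=
    h₁.comp_add_one_isLittleO.comp_tendsto (tendsto_atTop_add_const_right _ (-s) tendsto_id)
  exact hshift.trans_isLittleO (hstep.trans_isBigO hO)

theorem convolution_isLittleO {w h : ℝ → ℝ} (h₁ : SuperexpDecay E₁) (h₂ : SuperexpDecay E₂)
    (hw : Integrable w) (hh : Integrable h) (hwE : w =O[atTop] E₁) (hhE : h =o[atTop] E₂) :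
    (w ⋆[mul ℝ ℝ] h) =o[atTop] (E₁ ⋆[mul ℝ ℝ] E₂) := by
  obtain ⟨C, hC, hwC⟩ := hwE.exists_pos
  refine isLittleO_iff.2 fun ε hε => ?_
  set δ := ε / (2 * C)
  have hCδ : C * δ = ε / 2 := by simp only [δ]; field_simp
  obtain ⟨T, ⟨hwT, hhT⟩, anti₁, anti₂⟩ := (((eventually_forall_ge_atTop.2 hwC.bound).and
    (eventually_forall_ge_atTop.2 (hhE.def (by positivity : 0 < δ)))).and
    (h₁.eventually_antitoneOn.and h₂.eventually_antitoneOn)).exists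
  simp only [Real.norm_eq_abs, abs_of_pos (h₁.pos _), abs_of_pos (h₂.pos _)] at hwT hhT
  have hrem : (fun x => C * (∫ t, |h t|) * E₁ (x - T) + δ * (∫ t, |w t|) * E₂ (x - T))
      =o[atTop] (E₁ ⋆[mul ℝ ℝ] E₂) := by
    refine ((h₁.comp_sub_isLittleO_convolution h₂ T).const_mul_left _).add ?_
    rw [convolution_mul_comm]
    exact (h₂.comp_sub_isLittleO_convolution h₁ T).const_mul_left _
  filter_upwards [hrem.def (half_pos hε), h₁.eventually_convolutionExistsAt h₂,
    eventually_ge_atTop (T + T)] with x hremx hD hx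
  have hDx := convolution_nonneg (fun z => (h₁.pos z).le) (fun z => (h₂.pos z).le) x
  have hrem_nonneg : 0 ≤ C * (∫ t, |h t|) * E₁ (x - T) + δ * (∫ t, |w t|) * E₂ (x - T) := by
    have := (h₁.pos (x - T)).le; have := (h₂.pos (x - T)).le
    have : 0 ≤ ∫ t, |h t| := integral_nonneg fun t => abs_nonneg (h t)
    have : 0 ≤ ∫ t, |w t| := integral_nonneg fun t => abs_nonneg (w t)
    positivity
  rw [Real.norm_of_nonneg hrem_nonneg, Real.norm_of_nonneg hDx] at hremx
  rw [Real.norm_eq_abs, Real.norm_of_nonneg hDx]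
  have := abs_convolution_le_of_tail_bounds hw hh (fun z => (h₁.pos z).le)
    (fun z => (h₂.pos z).le) anti₁ anti₂ hC.le (by positivity) hwT hhT hD hx
  rw [hCδ] at this
  linarith

end SuperexpDecay

theorem Asymptotics.IsEquivalent.convolution {f g E₁ E₂ : ℝ → ℝ} (h₁ : SuperexpDecay E₁)
    (h₂ : SuperexpDecay E₂) (hf : Integrable f) (hg : Integrable g) (hfE : f ~[atTop] E₁)
    (hgE : g ~[atTop] E₂) : (f ⋆[mul ℝ ℝ] g) ~[atTop] (E₁ ⋆[mul ℝ ℝ] E₂) := by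
  have hf_bdd := hfE.isBigO.trans h₁.isBigO_one
  have hgE_bdd := hgE.isLittleO.isBigO.trans h₂.isBigO_one
  have hfE_bdd := hfE.isLittleO.isBigO.trans h₁.isBigO_one
  have hmain := h₁.convolution_isLittleO h₂ hf (hg.sub h₂.integrable) hfE.isBigO hgE.isLittleO
  have hcross := h₂.convolution_isLittleO h₁ h₂.integrable (hf.sub h₁.integrable)
    (isBigO_refl _ _) hfE.isLittleO
  rw [convolution_mul_comm E₂, convolution_mul_comm E₂] at hcross
  -- `f ⋆ g - E₁ ⋆ E₂ = f ⋆ (g - E₂) + (f - E₁) ⋆ E₂` wherever all four convolutions exist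
  refine (hmain.add hcross).congr' ?_ EventuallyEq.rfl
  filter_upwards
    [eventually_convolutionExistsAt_of_isBigO_one hf h₂.integrable hf_bdd h₂.isBigO_one,
    eventually_convolutionExistsAt_of_isBigO_one hf (hg.sub h₂.integrable) hf_bdd hgE_bdd,
    h₁.eventually_convolutionExistsAt h₂,
    eventually_convolutionExistsAt_of_isBigO_one (hf.sub h₁.integrable) h₂.integrable hfE_bdd
      h₂.isBigO_one] with x hfE₂ hfgE₂ hE₁E₂ hfE₁E₂
  have hsplit_g := hfE₂.distrib_add hfgE₂
  have hsplit_f := hE₁E₂.add_distrib hfE₁E₂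
  rw [add_sub_cancel] at hsplit_g hsplit_f
  simp only [Pi.sub_apply]
  linarith

theorem convolution_tail_asymptotics_general
    (a : ℝ) (ψ₁ ψ₂ : ℝ → ℝ)
    (hd₁ : ∀ y : ℝ, a < y → DifferentiableAt ℝ ψ₁ y)
    (hd₂ : ∀ y : ℝ, a < y → DifferentiableAt ℝ ψ₂ y)
    (hψ₁ : Tendsto (deriv ψ₁) atTop atTop)
    (hψ₂ : Tendsto (deriv ψ₂) atTop atTop)
    (hi₁ : Integrable (fun y : ℝ => Real.exp (-ψ₁ y)))
    (hi₂ : Integrable (fun y : ℝ => Real.exp (-ψ₂ y)))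
    (f g : ℝ → ℝ) (hf : Integrable f) (hg : Integrable g)
    (hfa : Tendsto (fun y : ℝ => f y * Real.exp (ψ₁ y)) atTop (nhds 1))
    (hga : Tendsto (fun y : ℝ => g y * Real.exp (ψ₂ y)) atTop (nhds 1)) :
    Tendsto (fun x : ℝ => (∫ y : ℝ, f (x - y) * g y) /
        ∫ y : ℝ, Real.exp (-ψ₁ (x - y)) * Real.exp (-ψ₂ y))
      atTop (nhds 1) := by
  have h₁ := SuperexpDecay.exp_neg ((eventually_gt_atTop a).mono hd₁) hψ₁ hi₁
  have h₂ := SuperexpDecay.exp_neg ((eventually_gt_atTop a).mono hd₂) hψ₂ hi₂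
  have hequiv := (isEquivalent_exp_neg_of_tendsto hfa).convolution h₁ h₂ hf hg
    (isEquivalent_exp_neg_of_tendsto hga)
  refine ((isEquivalent_iff_tendsto_one ((h₁.eventually_convolution_pos h₂).mono
    fun _ hx => hx.ne')).1 hequiv).congr fun x => ?_
  rw [Pi.div_apply, convolution_mul_swap, convolution_mul_swap]

/-- If `f ∼ e^{−ψ₁}` and `g ∼ e^{−ψ₂}` at `+∞`, where `ψ₁, ψ₂` are
differentiable on `(a,∞)` with derivatives tending to `∞` and `e^{−ψᵢ}` integrable, then
`(f*g)(x) ∼ (e^{−ψ₁} * e^{−ψ₂})(x)` as `x → ∞`. -/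
theorem convolution_tail_asymptotics
    (a : ℝ) (ψ₁ ψ₂ : ℝ → ℝ) (hm₁ : Measurable ψ₁) (hm₂ : Measurable ψ₂)
    (hd₁ : ∀ y : ℝ, a < y → DifferentiableAt ℝ ψ₁ y)
    (hd₂ : ∀ y : ℝ, a < y → DifferentiableAt ℝ ψ₂ y)
    (hψ₁ : Tendsto (deriv ψ₁) atTop atTop)
    (hψ₂ : Tendsto (deriv ψ₂) atTop atTop)
    (hi₁ : Integrable (fun y : ℝ => Real.exp (-ψ₁ y)))
    (hi₂ : Integrable (fun y : ℝ => Real.exp (-ψ₂ y)))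
    (f g : ℝ → ℝ) (hf : Integrable f) (hg : Integrable g)
    (hfa : Tendsto (fun y : ℝ => f y * Real.exp (ψ₁ y)) atTop (nhds 1))
    (hga : Tendsto (fun y : ℝ => g y * Real.exp (ψ₂ y)) atTop (nhds 1)) :
    Tendsto (fun x : ℝ => (∫ y : ℝ, f (x - y) * g y) /
        ∫ y : ℝ, Real.exp (-ψ₁ (x - y)) * Real.exp (-ψ₂ y))
      atTop (nhds 1) :=
  convolution_tail_asymptotics_general a ψ₁ ψ₂ hd₁ hd₂ hψ₁ hψ₂ hi₁ hi₂ f g hf hg hfa hga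
end
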